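/- arXiv:0709.4070 — 8 statements merged into one kernel-verified Lean document; each statement's English description precedes it below -/
import Mathlib

section
/- For every integer k ≥ 1, the number of lattice points in the k-th dilate of the triangle T with vertices (0,0), (1, (D-1)/D), and (D,0) (where D ≥ 2 is an integer) equals the number of lattice points in the k-th dilate of the integral triangle T' with vertices (1,0), (1,1), and (D,0). -/
open Pointwise
/-- Number of integer lattice points of `ℤ²` lying in a subset of `ℝ²`. -/
noncomputable def latticeCount2 (S : Set (ℝ × ℝ)) : ℕ :=
  {p : ℤ × ℤ | ((p.1 : ℝ), (p.2 : ℝ)) ∈ S}.ncard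

/-- The rational triangle with vertices `(0,0)`, `(1,(D-1)/D)`, `(D,0)`. -/
noncomputable def TriT (D : ℤ) : Set (ℝ × ℝ) :=
  convexHull ℝ {(0, 0), (1, ((D : ℝ) - 1) / (D : ℝ)), ((D : ℝ), 0)}

/-- The integral triangle with vertices `(1,0)`, `(1,1)`, `(D,0)`. -/
noncomputable def TriT' (D : ℤ) : Set (ℝ × ℝ) :=
  convexHull ℝ {(1, 0), (1, 1), ((D : ℝ), 0)}

/-!
Cut `k • T` along the line `x = k`. Its lattice points with `x ≥ k` are exactly the lattice
points of `k • T'` on or below the line `x + D y = k D`, and the unimodular affine map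
`(x, y) ↦ (k + (D - 1) x - D y, k - x + y)` carries its lattice points with `x < k` onto the
remaining lattice points of `k • T'`, those strictly above that line.
-/

theorem mem_convexHull_triple {E : Type*} [AddCommGroup E] [Module ℝ E] {p q r x : E} :
    x ∈ convexHull ℝ {p, q, r} ↔ ∃ a b c : ℝ, 0 ≤ a ∧ 0 ≤ b ∧ 0 ≤ c ∧ a + b + c = 1 ∧
      a • p + b • q + c • r = x := by
  constructor
  · refine fun hx => (convexHull_min ?_ ?_ : convexHull ℝ {p, q, r} ⊆
      {y | ∃ a b c : ℝ, 0 ≤ a ∧ 0 ≤ b ∧ 0 ≤ c ∧ a + b + c = 1 ∧ a • p + b • q + c • r = y}) hx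
    · rintro _ (rfl | rfl | rfl)
      · exact ⟨1, 0, 0, by norm_num, by norm_num, by norm_num, by norm_num, by simp⟩
      · exact ⟨0, 1, 0, by norm_num, by norm_num, by norm_num, by norm_num, by simp⟩
      · exact ⟨0, 0, 1, by norm_num, by norm_num, by norm_num, by norm_num, by simp⟩
    · rintro _ ⟨a, b, c, ha, hb, hc, habc, rfl⟩ _ ⟨a', b', c', ha', hb', hc', habc', rfl⟩
        s t hs ht hst
      refine ⟨s * a + t * a', s * b + t * b', s * c + t * c', by positivity, by positivity,
        by positivity, by linear_combination s * habc + t * habc' + hst, ?_⟩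
      simp only [smul_add, smul_smul, add_smul]
      abel
  · rintro ⟨a, b, c, ha, hb, hc, habc, rfl⟩
    have hmem : ∀ y ∈ ({p, q, r} : Set E), y ∈ convexHull ℝ {p, q, r} :=
      fun y hy => subset_convexHull ℝ _ hy
    have := (convex_convexHull ℝ ({p, q, r} : Set E)).sum_mem (t := Finset.univ)
      (w := ![a, b, c]) (z := ![p, q, r]) (by simp [Fin.forall_fin_succ, ha, hb, hc])
      (by simp [Fin.sum_univ_three, habc]) (by simp [Fin.forall_fin_succ, hmem])
    simpa [Fin.sum_univ_three] using this

theorem mem_smul_convexHull_triple {E : Type*} [AddCommGroup E] [Module ℝ E]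
    {p q r x : E} {s : ℝ} :
    x ∈ s • convexHull ℝ {p, q, r} ↔ ∃ a b c : ℝ, 0 ≤ a ∧ 0 ≤ b ∧ 0 ≤ c ∧ a + b + c = 1 ∧
      s • (a • p + b • q + c • r) = x := by
  simp only [Set.mem_smul_set, mem_convexHull_triple]
  constructor
  · rintro ⟨_, ⟨a, b, c, ha, hb, hc, habc, rfl⟩, rfl⟩
    exact ⟨a, b, c, ha, hb, hc, habc, rfl⟩
  · rintro ⟨a, b, c, ha, hb, hc, habc, rfl⟩
    exact ⟨_, ⟨a, b, c, ha, hb, hc, habc, rfl⟩, rfl⟩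

theorem mem_smul_TriT_hull_iff {D s u v : ℝ} (hD : 1 < D) (hs : 0 < s) :
    (u, v) ∈ s • convexHull ℝ {(0, 0), (1, (D - 1) / D), (D, 0)} ↔
      0 ≤ v ∧ D * v ≤ (D - 1) * u ∧ u + D * v ≤ s * D := by
  simp only [mem_smul_convexHull_triple, Prod.smul_mk, Prod.mk_add_mk, Prod.mk.injEq,
    smul_eq_mul, mul_zero, add_zero, zero_add, mul_one]
  have hD0 : 0 < D := by linarith
  have hD1 : 0 < D - 1 := by linarith
  constructor
  · rintro ⟨a, b, c, ha, hb, hc, habc, rfl, rfl⟩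
    obtain rfl : a = 1 - b - c := by linarith
    have hv : D * (s * (b * ((D - 1) / D))) = s * b * (D - 1) := by field_simp
    refine ⟨by positivity, ?_, ?_⟩ <;> rw [hv]
    · nlinarith [mul_nonneg (mul_nonneg hs.le hc) (mul_nonneg hD1.le hD0.le)]
    · nlinarith [mul_nonneg (mul_nonneg hs.le ha) hD0.le]
  · rintro ⟨hv, hvu, huv⟩
    refine ⟨1 - D * v / (s * (D - 1)) - ((D - 1) * u - D * v) / (s * D * (D - 1)),
      D * v / (s * (D - 1)), ((D - 1) * u - D * v) / (s * D * (D - 1)), ?_, by positivity,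
      div_nonneg (by linarith) (by positivity), by ring, by field_simp; ring, by field_simp⟩
    have : 1 - D * v / (s * (D - 1)) - ((D - 1) * u - D * v) / (s * D * (D - 1))
        = (s * D - (u + D * v)) / (s * D) := by
      field_simp; ring
    rw [this]
    exact div_nonneg (by linarith) (by positivity)

theorem mem_smul_TriT'_hull_iff {D s u v : ℝ} (hD : 1 < D) (hs : 0 < s) :
    (u, v) ∈ s • convexHull ℝ {(1, 0), (1, 1), (D, 0)} ↔
      0 ≤ v ∧ s ≤ u ∧ u + (D - 1) * v ≤ s * D := by
  simp only [mem_smul_convexHull_triple, Prod.smul_mk, Prod.mk_add_mk, Prod.mk.injEq,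
    smul_eq_mul, mul_zero, add_zero, zero_add, mul_one]
  have hD1 : 0 < D - 1 := by linarith
  constructor
  · rintro ⟨a, b, c, ha, hb, hc, habc, rfl, rfl⟩
    obtain rfl : a = 1 - b - c := by linarith
    refine ⟨by positivity, ?_, ?_⟩
    · nlinarith [mul_nonneg (mul_nonneg hs.le hc) hD1.le]
    · nlinarith [mul_nonneg (mul_nonneg hs.le ha) hD1.le]
  · rintro ⟨hv, hsu, huv⟩
    refine ⟨1 - v / s - (u - s) / (s * (D - 1)), v / s, (u - s) / (s * (D - 1)), ?_,
      by positivity, div_nonneg (by linarith) (by positivity), by ring,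
      by field_simp; ring, by field_simp⟩
    have : 1 - v / s - (u - s) / (s * (D - 1))
        = (s * D - (u + (D - 1) * v)) / (s * (D - 1)) := by
      field_simp; ring
    rw [this]
    exact div_nonneg (by linarith) (by positivity)

def latticeTriT (D k : ℤ) : Set (ℤ × ℤ) :=
  {p | 0 ≤ p.2 ∧ D * p.2 ≤ (D - 1) * p.1 ∧ p.1 + D * p.2 ≤ k * D}

def latticeTriT' (D k : ℤ) : Set (ℤ × ℤ) :=
  {p | 0 ≤ p.2 ∧ k ≤ p.1 ∧ p.1 + (D - 1) * p.2 ≤ k * D}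

def triFold (D k : ℤ) (p : ℤ × ℤ) : ℤ × ℤ :=
  if p.1 < k then (k + (D - 1) * p.1 - D * p.2, k - p.1 + p.2) else p

def triUnfold (D k : ℤ) (p : ℤ × ℤ) : ℤ × ℤ :=
  if k * D < p.1 + D * p.2 then (k + k * D - D * p.2 - p.1, k * D - (D - 1) * p.2 - p.1) else p

section Fold

variable {D : ℤ} (k : ℤ)

theorem mapsTo_triFold : Set.MapsTo (triFold D k) (latticeTriT D k) (latticeTriT' D k) := by
  rintro ⟨x, y⟩ ⟨hy, hxy, hsum⟩
  unfold triFold latticeTriT'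
  split_ifs with hx
  · exact ⟨by linarith, by linarith, by linarith⟩
  · exact ⟨hy, by linarith, by linarith⟩

theorem mapsTo_triUnfold (hD : 0 ≤ D) :
    Set.MapsTo (triUnfold D k) (latticeTriT' D k) (latticeTriT D k) := by
  rintro ⟨x, y⟩ ⟨hy, hx, hsum⟩
  unfold triUnfold latticeTriT
  split_ifs with h
  · refine ⟨by linarith, by linarith, ?_⟩
    nlinarith [mul_nonneg hD (by linarith : 0 ≤ x + D * y - k * D)]
  · refine ⟨hy, ?_, by linarith⟩
    nlinarith [mul_nonneg hD (by linarith : 0 ≤ x - k)]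

theorem invOn_triUnfold_triFold :
    Set.InvOn (triUnfold D k) (triFold D k) (latticeTriT D k) (latticeTriT' D k) := by
  constructor
  · rintro ⟨x, y⟩ ⟨hy, hxy, hsum⟩
    unfold triFold
    split_ifs with hx
    · rw [triUnfold, if_pos (by linarith)]
      ext <;> simp only <;> ring
    · rw [triUnfold, if_neg (by simpa using hsum)]
  · rintro ⟨x, y⟩ ⟨hy, hx, hsum⟩
    unfold triUnfold
    split_ifs with h
    · rw [triFold, if_pos (by linarith)]
      ext <;> simp only <;> ring
    · rw [triFold, if_neg (by simpa using hx)]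

theorem ncard_latticeTriT_eq (hD : 0 ≤ D) :
    (latticeTriT D k).ncard = (latticeTriT' D k).ncard :=
  ((invOn_triUnfold_triFold k).bijOn (mapsTo_triFold k) (mapsTo_triUnfold k hD)).ncard_eq

end Fold

theorem latticeCount2_smul_TriT {D : ℤ} (hD : 1 < D) {k : ℕ} (hk : 0 < k) :
    latticeCount2 ((k : ℝ) • TriT D) = (latticeTriT D k).ncard := by
  have hDr : (1 : ℝ) < D := by exact_mod_cast hD
  have hkr : (0 : ℝ) < k := by exact_mod_cast hk
  unfold latticeCount2 TriT
  congr 1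
  ext ⟨x, y⟩
  rw [Set.mem_ofPred_eq, mem_smul_TriT_hull_iff hDr hkr]
  unfold latticeTriT
  norm_cast

theorem latticeCount2_smul_TriT' {D : ℤ} (hD : 1 < D) {k : ℕ} (hk : 0 < k) :
    latticeCount2 ((k : ℝ) • TriT' D) = (latticeTriT' D k).ncard := by
  have hDr : (1 : ℝ) < D := by exact_mod_cast hD
  have hkr : (0 : ℝ) < k := by exact_mod_cast hk
  unfold latticeCount2 TriT'
  congr 1
  ext ⟨x, y⟩
  rw [Set.mem_ofPred_eq, mem_smul_TriT'_hull_iff hDr hkr]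
  unfold latticeTriT'
  norm_cast

theorem stmt0 (D : ℤ) (hD : 2 ≤ D) (k : ℕ) (hk : 1 ≤ k) :
    latticeCount2 ((k : ℝ) • TriT D) = latticeCount2 ((k : ℝ) • TriT' D) := by
  rw [latticeCount2_smul_TriT hD hk, latticeCount2_smul_TriT' hD hk]
  exact ncard_latticeTriT_eq k (by omega)
end

section
/- The affine unimodular map U(x) = [[D-1, -D], [-1, 1]]·x + (1,1)ᵗ has determinant -1 in its linear part (so the linear part is in GL₂(ℤ)), and it maps the half-open triangle L = conv{(0,0),(1,0),(1,(D-1)/D)} \ [(1,0),(1,(D-1)/D)] bijectively onto T' \ R, where R = conv{(1,0),(D,0),(1,(D-1)/D)} and T' = conv{(1,0),(1,1),(D,0)}. -/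
/-!
`U` sends the vertices `(0,0)`, `(1,0)`, `(1,(D-1)/D)` of `L` to `(1,1)`, `(D,0)`, `(1,(D-1)/D)`:
the closed triangle `L` goes onto the part of `T'` on or above the hypotenuse of `R`, and the
removed vertical edge onto that hypotenuse. Concretely, every triangle involved has a right angle
at its vertex on the line `x = 1`, so each set is cut out by explicit linear inequalities, and `U`
and its inverse carry one system onto the other.
-/

open Pointwise

/-- The affine map `U(x) = [[D-1,-D],[-1,1]] x + (1,1)`. -/
noncomputable def Umap (D : ℤ) (x : ℝ × ℝ) : ℝ × ℝ :=
  (((D : ℝ) - 1) * x.1 - (D : ℝ) * x.2 + 1, -x.1 + x.2 + 1)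

/-- The half-open triangle `L`: `conv{(0,0),(1,0),(1,(D-1)/D)}` minus the closed
segment from `(1,0)` to `(1,(D-1)/D)`. -/
noncomputable def Lset (D : ℤ) : Set (ℝ × ℝ) :=
  convexHull ℝ {(0, 0), (1, 0), (1, ((D : ℝ) - 1) / (D : ℝ))} \
    segment ℝ (1, 0) (1, ((D : ℝ) - 1) / (D : ℝ))

/-- The closed triangle `R = conv{(1,0),(D,0),(1,(D-1)/D)}`. -/
noncomputable def Rset (D : ℤ) : Set (ℝ × ℝ) :=
  convexHull ℝ {(1, 0), ((D : ℝ), 0), (1, ((D : ℝ) - 1) / (D : ℝ))}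

theorem mem_convexHull_triple_iff {𝕜 E : Type*} [Field 𝕜] [LinearOrder 𝕜] [IsStrictOrderedRing 𝕜]
    [AddCommGroup E] [Module 𝕜 E] {a b c p : E} :
    p ∈ convexHull 𝕜 {a, b, c} ↔
      ∃ α β γ : 𝕜, 0 ≤ α ∧ 0 ≤ β ∧ 0 ≤ γ ∧ α + β + γ = 1 ∧ α • a + β • b + γ • c = p := by
  constructor
  · rw [convexHull_insert (Set.insert_nonempty b {c}), convexHull_pair,
      convexJoin_singleton_left]
    simp only [Set.mem_iUnion]
    rintro ⟨q, ⟨u, v, hu, hv, huv, rfl⟩, s, t, hs, ht, hst, rfl⟩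
    refine ⟨s, t * u, t * v, hs, mul_nonneg ht hu, mul_nonneg ht hv, ?_, ?_⟩
    · linear_combination t * huv + hst
    · simp only [smul_add, smul_smul, add_assoc]
  · rintro ⟨α, β, γ, hα, hβ, hγ, hsum, rfl⟩
    have := (convex_convexHull 𝕜 ({a, b, c} : Set E)).sum_mem (t := Finset.univ)
      (w := ![α, β, γ]) (z := ![a, b, c]) ?_ ?_ ?_
    · simpa [Fin.sum_univ_three, add_assoc] using this
    · simp [Fin.forall_fin_succ, hα, hβ, hγ]
    · simpa [Fin.sum_univ_three, add_assoc] using hsum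
    · simp [Fin.forall_fin_succ, subset_convexHull 𝕜 _ _]

theorem mem_segment_vertical_iff {c h : ℝ} (hh : 0 ≤ h) {p : ℝ × ℝ} :
    p ∈ segment ℝ (c, 0) (c, h) ↔ p.1 = c ∧ 0 ≤ p.2 ∧ p.2 ≤ h := by
  rw [← Prod.image_mk_segment_right, segment_eq_Icc hh]
  constructor
  · rintro ⟨y, hy, rfl⟩
    exact ⟨rfl, hy⟩
  · rintro ⟨hx, hy⟩
    exact ⟨p.2, hy, by rw [← hx]⟩

theorem mem_convexHull_right_triangle_of_lt {a c h : ℝ} (hac : a < c) (hh : 0 < h)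
    {p : ℝ × ℝ} :
    p ∈ convexHull ℝ {(a, 0), (c, 0), (c, h)} ↔
      0 ≤ p.2 ∧ p.1 ≤ c ∧ (c - a) * p.2 ≤ h * (p.1 - a) := by
  have hca : 0 < c - a := sub_pos.mpr hac
  rw [mem_convexHull_triple_iff]
  constructor
  · rintro ⟨α, β, γ, hα, hβ, hγ, hsum, rfl⟩
    obtain rfl : β = 1 - α - γ := by linear_combination hsum
    simp only [Prod.fst_add, Prod.snd_add, Prod.smul_fst, Prod.smul_snd, smul_eq_mul]
    exact ⟨by positivity, by linarith [mul_nonneg hα hca.le],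
      by linarith [mul_nonneg (mul_nonneg hh.le hca.le) hβ]⟩
  · rintro ⟨hy, hx, hxy⟩
    refine ⟨(c - p.1) / (c - a), 1 - (c - p.1) / (c - a) - p.2 / h, p.2 / h,
      div_nonneg (by linarith) hca.le, ?_, div_nonneg hy hh.le, by ring, ?_⟩
    · rw [sub_sub, sub_nonneg, div_add_div _ _ hca.ne' hh.ne', div_le_one (by positivity)]
      nlinarith
    · simp only [Prod.ext_iff, Prod.fst_add, Prod.snd_add, Prod.smul_fst, Prod.smul_snd, mul_zero,
        smul_eq_mul, zero_add]
      constructor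
      · field_simp
        ring
      · field_simp

theorem mem_convexHull_right_triangle_of_gt {a c h : ℝ} (hca : c < a) (hh : 0 < h)
    {p : ℝ × ℝ} :
    p ∈ convexHull ℝ {(a, 0), (c, 0), (c, h)} ↔
      0 ≤ p.2 ∧ c ≤ p.1 ∧ (a - c) * p.2 ≤ h * (a - p.1) := by
  have hac : 0 < a - c := sub_pos.mpr hca
  rw [mem_convexHull_triple_iff]
  constructor
  · rintro ⟨α, β, γ, hα, hβ, hγ, hsum, rfl⟩
    obtain rfl : β = 1 - α - γ := by linear_combination hsum
    simp only [Prod.fst_add, Prod.snd_add, Prod.smul_fst, Prod.smul_snd, smul_eq_mul]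
    exact ⟨by positivity, by linarith [mul_nonneg hα hac.le],
      by linarith [mul_nonneg (mul_nonneg hh.le hac.le) hβ]⟩
  · rintro ⟨hy, hx, hxy⟩
    refine ⟨(p.1 - c) / (a - c), 1 - (p.1 - c) / (a - c) - p.2 / h, p.2 / h,
      div_nonneg (by linarith) hac.le, ?_, div_nonneg hy hh.le, by ring, ?_⟩
    · rw [sub_sub, sub_nonneg, div_add_div _ _ hac.ne' hh.ne', div_le_one (by positivity)]
      nlinarith
    · simp only [Prod.ext_iff, Prod.fst_add, Prod.snd_add, Prod.smul_fst, Prod.smul_snd, mul_zero,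
        smul_eq_mul, zero_add]
      constructor
      · field_simp
        ring
      · field_simp

/-- `U⁻¹ y = A⁻¹ (y - (1,1))` with `A⁻¹ = [[-1,-D],[-1,1-D]]`. -/
noncomputable def Uinv (D : ℤ) (y : ℝ × ℝ) : ℝ × ℝ :=
  ((D : ℝ) + 1 - y.1 - D * y.2, (D : ℝ) - y.1 - ((D : ℝ) - 1) * y.2)

theorem Uinv_leftInverse (D : ℤ) : Function.LeftInverse (Uinv D) (Umap D) := fun x => by
  ext <;> simp only [Uinv, Umap] <;> ring

theorem Uinv_rightInverse (D : ℤ) : Function.RightInverse (Uinv D) (Umap D) := fun y => by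
  ext <;> simp only [Uinv, Umap] <;> ring

section

variable {D : ℤ}

theorem mem_Lset_iff (hD : 2 ≤ D) {p : ℝ × ℝ} :
    p ∈ Lset D ↔ 0 ≤ p.2 ∧ (D : ℝ) * p.2 ≤ ((D : ℝ) - 1) * p.1 ∧ p.1 < 1 := by
  have hD' : (2 : ℝ) ≤ D := by exact_mod_cast hD
  have hm : (0 : ℝ) < ((D : ℝ) - 1) / D := by apply div_pos <;> linarith
  have hslope : p.2 ≤ ((D : ℝ) - 1) / D * p.1 ↔ (D : ℝ) * p.2 ≤ ((D : ℝ) - 1) * p.1 := by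
    rw [div_mul_eq_mul_div, le_div_iff₀ (by linarith), mul_comm]
  rw [Lset, Set.mem_sdiff, mem_convexHull_right_triangle_of_lt zero_lt_one hm,
    mem_segment_vertical_iff hm.le]
  simp only [sub_zero, one_mul, hslope]
  constructor
  · rintro ⟨⟨hy, hx, hxy⟩, hseg⟩
    refine ⟨hy, hxy, lt_of_le_of_ne hx fun hx1 => hseg ⟨hx1, hy, ?_⟩⟩
    simpa [hx1] using hslope.mpr hxy
  · rintro ⟨hy, hxy, hx⟩
    exact ⟨⟨hy, hx.le, hxy⟩, fun hseg => hx.ne hseg.1⟩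

theorem mem_TriT'_sdiff_Rset_iff (hD : 2 ≤ D) {p : ℝ × ℝ} :
    p ∈ TriT' D \ Rset D ↔
      1 ≤ p.1 ∧ 0 ≤ p.2 ∧ p.1 + ((D : ℝ) - 1) * p.2 ≤ D ∧ (D : ℝ) < p.1 + D * p.2 := by
  have hD' : (2 : ℝ) ≤ D := by exact_mod_cast hD
  have hm : (0 : ℝ) < ((D : ℝ) - 1) / D := by apply div_pos <;> linarith
  have hslope : ((D : ℝ) - 1) * p.2 ≤ ((D : ℝ) - 1) / D * (D - p.1) ↔ p.1 + D * p.2 ≤ D := by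
    rw [div_mul_eq_mul_div, le_div_iff₀ (by linarith), mul_right_comm, mul_assoc,
      mul_le_mul_iff_right₀ (by linarith)]
    constructor <;> intro h <;> linarith
  rw [TriT', Rset, Set.pair_comm, Set.insert_comm, Set.insert_comm (1, 0), Set.mem_sdiff,
    mem_convexHull_right_triangle_of_gt (by linarith) zero_lt_one,
    mem_convexHull_right_triangle_of_gt (by linarith) hm, hslope, not_and, not_and, not_le]
  constructor
  · rintro ⟨⟨hy, hx, hT⟩, hR⟩
    exact ⟨hx, hy, by linarith, hR hy hx⟩
  · rintro ⟨hx, hy, hT, hR⟩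
    exact ⟨⟨hy, hx, by linarith⟩, fun _ _ => hR⟩

theorem mapsTo_Umap (hD : 2 ≤ D) : Set.MapsTo (Umap D) (Lset D) (TriT' D \ Rset D) := by
  intro x hx
  obtain ⟨hx2, hslope, hx1⟩ := (mem_Lset_iff hD).mp hx
  refine (mem_TriT'_sdiff_Rset_iff hD).mpr ⟨?_, ?_, ?_, ?_⟩ <;> simp only [Umap] <;> linarith

theorem mapsTo_Uinv (hD : 2 ≤ D) : Set.MapsTo (Uinv D) (TriT' D \ Rset D) (Lset D) := by
  intro y hy
  obtain ⟨hy1, hy2, hT, hR⟩ := (mem_TriT'_sdiff_Rset_iff hD).mp hy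
  refine (mem_Lset_iff hD).mpr ⟨?_, ?_, ?_⟩ <;> simp only [Uinv] <;> linarith

end

theorem stmt1 (D : ℤ) (hD : 2 ≤ D) :
    Matrix.det !![D - 1, -D; -1, 1] = -1 ∧
    Set.BijOn (Umap D) (Lset D) (TriT' D \ Rset D) := by
  refine ⟨by rw [Matrix.det_fin_two_of]; ring, ?_⟩
  exact Set.InvOn.bijOn ⟨(Uinv_leftInverse D).leftInvOn _, (Uinv_rightInverse D).leftInvOn _⟩
    (mapsTo_Umap hD) (mapsTo_Uinv hD)
end

section
/- For every integer D ≥ 2, let T = conv{(0,0), (1,(D-1)/D), (D,0)}; then the number of lattice points in the k-th dilate of T is a polynomial in k (independent of k mod D), i.e., there exist rationals a, b, c with |kT ∩ ℤ²| = a k² + b k + c for all integers k ≥ 1. -/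
open Pointwise

lemma icc_split (m M : ℤ) (h0 : 0 ≤ m) (h : m ≤ M) :
    Finset.Icc 0 M = Finset.Icc 0 m ∪ Finset.Icc (m+1) M := by
  ext x; simp only [Finset.mem_Icc, Finset.mem_union]; omega

lemma icc_disj (m M : ℤ) :
    Disjoint (Finset.Icc (0:ℤ) m) (Finset.Icc (m+1) M) := by
  rw [Finset.disjoint_left]
  intro x hx hy
  simp only [Finset.mem_Icc] at hx hy
  omega

lemma sum_id (k : ℕ) : 2 * ∑ p ∈ Finset.Icc (0:ℤ) (k:ℤ), p = k * (k+1) := by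
  induction k with
  | zero => simp
  | succ n ih =>
    have h : Finset.Icc (0:ℤ) ((n:ℤ)+1) = insert ((n:ℤ)+1) (Finset.Icc 0 (n:ℤ)) := by
      ext x; simp only [Finset.mem_Icc, Finset.mem_insert]; omega
    push_cast
    rw [h, Finset.sum_insert (by simp)]
    push_cast at ih
    nlinarith [ih]

lemma ediv_neg_eq {D : ℤ} (hD : 2 ≤ D) {j : ℤ} (h1 : j*D < p) (h2 : p ≤ (j+1)*D) :
    (-p)/D = -(j+1) := by
  have key : -p = ((j+1)*D - p) + (-(j+1))*D := by ring
  have e1 : (j+1)*D = j*D + D := by ring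
  rw [key, Int.add_mul_ediv_right _ _ (by omega : D ≠ 0),
    Int.ediv_eq_zero_of_lt (by omega) (by omega)]
  simp

lemma sum_ediv {D : ℤ} (hD : 2 ≤ D) (k : ℕ) :
    2 * ∑ p ∈ Finset.Icc (0:ℤ) ((k:ℤ)*D), (-p)/D = -(D * k * (k+1)) := by
  induction k with
  | zero => simp
  | succ n ih =>
    have hD0 : (0:ℤ) < D := by omega
    have hsplit := icc_split ((n:ℤ)*D) (((n:ℤ)+1)*D) (by positivity) (by nlinarith)
    push_cast
    rw [hsplit, Finset.sum_union (icc_disj _ _)]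
    have hconst : ∀ p ∈ Finset.Icc ((n:ℤ)*D+1) (((n:ℤ)+1)*D), (-p)/D = -((n:ℤ)+1) := by
      intro p hp
      simp only [Finset.mem_Icc] at hp
      exact ediv_neg_eq hD (by omega) hp.2
    rw [Finset.sum_congr rfl hconst, Finset.sum_const, nsmul_eq_mul]
    have hcard : ((Finset.Icc ((n:ℤ)*D+1) (((n:ℤ)+1)*D)).card : ℤ) = D := by
      rw [Int.card_Icc]
      have e : ((n:ℤ)+1)*D + 1 - ((n:ℤ)*D+1) = D := by ring
      rw [e, Int.toNat_of_nonneg hD0.le]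
    rw [hcard]
    push_cast at ih
    linear_combination ih

lemma dilate_eq (D : ℤ) (k : ℕ) :
    (k : ℝ) • TriT D = convexHull ℝ
      {((0:ℝ),(0:ℝ)), ((k:ℝ), (k:ℝ)*(((D:ℝ)-1)/(D:ℝ))), ((k:ℝ)*(D:ℝ), (0:ℝ))} := by
  rw [TriT, ← convexHull_smul]
  congr 1
  rw [Set.smul_set_insert, Set.smul_set_insert, Set.smul_set_singleton]
  simp [Prod.smul_mk, smul_eq_mul]

lemma mem_hull_iff (D : ℤ) (hD : 2 ≤ D) (k : ℕ) (hk : 1 ≤ k) (x y : ℝ) :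
    (x, y) ∈ convexHull ℝ
      ({((0:ℝ),(0:ℝ)), ((k:ℝ), (k:ℝ)*(((D:ℝ)-1)/(D:ℝ))), ((k:ℝ)*(D:ℝ), (0:ℝ))} : Set (ℝ×ℝ)) ↔
    0 ≤ y ∧ (D:ℝ)*y ≤ ((D:ℝ)-1)*x ∧ x + (D:ℝ)*y ≤ (k:ℝ)*(D:ℝ) := by
  have hDR : (2:ℝ) ≤ (D:ℝ) := by exact_mod_cast hD
  have hD0 : (0:ℝ) < (D:ℝ) := by linarith
  have hD1 : (0:ℝ) < (D:ℝ) - 1 := by linarith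
  have hkR : (1:ℝ) ≤ (k:ℝ) := by exact_mod_cast hk
  have hk0 : (0:ℝ) < (k:ℝ) := by linarith
  have hDne : (D:ℝ) ≠ 0 := ne_of_gt hD0
  have hD1ne : (D:ℝ) - 1 ≠ 0 := ne_of_gt hD1
  have hkne : (k:ℝ) ≠ 0 := ne_of_gt hk0
  constructor
  · intro h
    have hconv : Convex ℝ {p : ℝ×ℝ | 0 ≤ p.2 ∧ (D:ℝ)*p.2 ≤ ((D:ℝ)-1)*p.1 ∧
        p.1 + (D:ℝ)*p.2 ≤ (k:ℝ)*(D:ℝ)} := by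
      intro p hp q hq a b ha hb hab
      obtain ⟨h1, h2, h3⟩ := hp
      obtain ⟨h1', h2', h3'⟩ := hq
      refine ⟨?_, ?_, ?_⟩ <;>
        simp only [Prod.fst_add, Prod.snd_add, Prod.smul_fst, Prod.smul_snd, smul_eq_mul]
      · exact add_nonneg (mul_nonneg ha h1) (mul_nonneg hb h1')
      · calc (D:ℝ) * (a * p.2 + b * q.2) = a * ((D:ℝ)*p.2) + b * ((D:ℝ)*q.2) := by ring
          _ ≤ a * (((D:ℝ)-1)*p.1) + b * (((D:ℝ)-1)*q.1) :=
            add_le_add (mul_le_mul_of_nonneg_left h2 ha) (mul_le_mul_of_nonneg_left h2' hb)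
          _ = ((D:ℝ)-1) * (a * p.1 + b * q.1) := by ring
      · calc a * p.1 + b * q.1 + (D:ℝ) * (a * p.2 + b * q.2)
            = a * (p.1 + (D:ℝ)*p.2) + b * (q.1 + (D:ℝ)*q.2) := by ring
          _ ≤ a * ((k:ℝ)*(D:ℝ)) + b * ((k:ℝ)*(D:ℝ)) :=
            add_le_add (mul_le_mul_of_nonneg_left h3 ha) (mul_le_mul_of_nonneg_left h3' hb)
          _ = (k:ℝ)*(D:ℝ) := by rw [← add_mul, hab, one_mul]
    have hsub : ({((0:ℝ),(0:ℝ)), ((k:ℝ), (k:ℝ)*(((D:ℝ)-1)/(D:ℝ))), ((k:ℝ)*(D:ℝ), (0:ℝ))} : Set (ℝ×ℝ))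
        ⊆ {p : ℝ×ℝ | 0 ≤ p.2 ∧ (D:ℝ)*p.2 ≤ ((D:ℝ)-1)*p.1 ∧ p.1 + (D:ℝ)*p.2 ≤ (k:ℝ)*(D:ℝ)} := by
      have e1 : (D:ℝ)*((k:ℝ)*(((D:ℝ)-1)/(D:ℝ))) = (k:ℝ)*((D:ℝ)-1) := by field_simp
      intro p hp
      simp only [Set.mem_insert_iff, Set.mem_singleton_iff] at hp
      rcases hp with rfl | rfl | rfl
      · refine ⟨le_refl _, by norm_num, ?_⟩
        show (0:ℝ) + (D:ℝ)*(0:ℝ) ≤ (k:ℝ)*(D:ℝ)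
        norm_num
        positivity
      · refine ⟨by positivity, ?_, ?_⟩
        · show (D:ℝ)*((k:ℝ)*(((D:ℝ)-1)/(D:ℝ))) ≤ ((D:ℝ)-1)*(k:ℝ)
          rw [e1]; nlinarith
        · show (k:ℝ) + (D:ℝ)*((k:ℝ)*(((D:ℝ)-1)/(D:ℝ))) ≤ (k:ℝ)*(D:ℝ)
          rw [e1]; nlinarith
      · refine ⟨le_refl _, ?_, by norm_num⟩
        show (D:ℝ)*(0:ℝ) ≤ ((D:ℝ)-1)*((k:ℝ)*(D:ℝ))
        norm_num; positivity
    exact convexHull_min hsub hconv h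
  · rintro ⟨h1, h2, h3⟩
    set β : ℝ := (D:ℝ)*y / (((D:ℝ)-1)*(k:ℝ)) with hβ
    set γ : ℝ := (((D:ℝ)-1)*x - (D:ℝ)*y) / (((D:ℝ)-1)*(k:ℝ)*(D:ℝ)) with hγ
    have hβ0 : 0 ≤ β := by
      apply div_nonneg (by nlinarith) (by nlinarith)
    have hγ0 : 0 ≤ γ := by
      apply div_nonneg (by nlinarith) (by positivity)
    have hsum : β + γ = (x + (D:ℝ)*y) / ((k:ℝ)*(D:ℝ)) := by
      rw [hβ, hγ, div_add_div _ _ (mul_ne_zero hD1ne hkne)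
        (mul_ne_zero (mul_ne_zero hD1ne hkne) hDne),
        div_eq_div_iff (mul_ne_zero (mul_ne_zero hD1ne hkne)
          (mul_ne_zero (mul_ne_zero hD1ne hkne) hDne)) (mul_ne_zero hkne hDne)]
      ring
    have hle1 : β + γ ≤ 1 := by
      rw [hsum]
      rw [div_le_one (by positivity)]
      linarith
    rw [convexHull_eq]
    refine ⟨Fin 3, Finset.univ, ![1 - β - γ, β, γ],
      ![((0:ℝ),(0:ℝ)), ((k:ℝ), (k:ℝ)*(((D:ℝ)-1)/(D:ℝ))), ((k:ℝ)*(D:ℝ), (0:ℝ))], ?_, ?_, ?_, ?_⟩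
    · intro i _
      fin_cases i <;> simp [hβ0, hγ0] <;> linarith
    · simp [Fin.sum_univ_three]; ring
    · intro i _
      fin_cases i <;> simp
    · rw [Finset.centerMass_eq_of_sum_1]
      · rw [Fin.sum_univ_three]
        simp only [Matrix.cons_val_zero, Matrix.cons_val_one, Matrix.head_cons,
          Matrix.cons_val_two, Matrix.tail_cons, Prod.smul_mk, smul_eq_mul]
        have : (x, y) = ((β*(k:ℝ) + γ*((k:ℝ)*(D:ℝ)), β*((k:ℝ)*(((D:ℝ)-1)/(D:ℝ))))) := by
          rw [Prod.mk.injEq]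
          constructor
          · rw [hβ, hγ]; field_simp; ring
          · rw [hβ]; field_simp
        rw [this]
        ext <;> simp <;> ring
      · rw [Fin.sum_univ_three]; simp; ring

lemma count_eq (D : ℤ) (hD : 2 ≤ D) (k : ℕ) (hk : 1 ≤ k) :
    2 * (latticeCount2 ((k:ℝ) • TriT D) : ℤ) = (D-1)*(k:ℤ)^2 + (D+1)*(k:ℤ) + 2 := by
  classical
  have hD0 : (0:ℤ) < D := by omega
  have hmem : ∀ p : ℤ×ℤ, (((p.1:ℝ),(p.2:ℝ)) ∈ (k:ℝ) • TriT D) ↔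
      (0 ≤ p.2 ∧ D*p.2 ≤ (D-1)*p.1 ∧ p.1 + D*p.2 ≤ (k:ℤ)*D) := by
    intro p
    rw [dilate_eq, mem_hull_iff D hD k hk]
    constructor
    · rintro ⟨h1, h2, h3⟩
      refine ⟨by exact_mod_cast h1, ?_, ?_⟩
      · have : ((D*p.2 : ℤ):ℝ) ≤ (((D-1)*p.1 : ℤ):ℝ) := by push_cast; push_cast at h2; linarith
        exact_mod_cast this
      · have : ((p.1 + D*p.2 : ℤ):ℝ) ≤ (((k:ℤ)*D : ℤ):ℝ) := by push_cast; push_cast at h3; linarith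
        exact_mod_cast this
    · rintro ⟨h1, h2, h3⟩
      refine ⟨by exact_mod_cast h1, ?_, ?_⟩
      · have : ((D*p.2 : ℤ):ℝ) ≤ (((D-1)*p.1 : ℤ):ℝ) := by exact_mod_cast h2
        push_cast at this; linarith
      · have : ((p.1 + D*p.2 : ℤ):ℝ) ≤ (((k:ℤ)*D : ℤ):ℝ) := by exact_mod_cast h3
        push_cast at this; linarith
  set F : Finset (ℤ×ℤ) := (Finset.Icc (0:ℤ) ((k:ℤ)*D) ×ˢ Finset.Icc (0:ℤ) (k:ℤ)).filter
    (fun p => D*p.2 ≤ (D-1)*p.1 ∧ p.1 + D*p.2 ≤ (k:ℤ)*D) with hF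
  have hFeq : {p : ℤ×ℤ | ((p.1:ℝ),(p.2:ℝ)) ∈ (k:ℝ) • TriT D} = ↑F := by
    ext p
    rw [Set.mem_setOf_eq, hmem p, hF]
    simp only [Finset.coe_filter, Set.mem_setOf_eq, Finset.mem_product, Finset.mem_Icc]
    constructor
    · rintro ⟨h1, h2, h3⟩
      have hDp : 0 ≤ D * p.2 := mul_nonneg hD0.le h1
      have hp1 : 0 ≤ p.1 := by
        have h0 : (D-1) * 0 ≤ (D-1) * p.1 := by simpa using le_trans hDp h2
        exact le_of_mul_le_mul_left h0 (by omega)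
      have hp2 : p.2 ≤ (k:ℤ) := by
        have : D * p.2 ≤ D * (k:ℤ) := by nlinarith
        exact le_of_mul_le_mul_left this hD0
      exact ⟨⟨⟨hp1, by linarith⟩, h1, hp2⟩, h2, h3⟩
    · rintro ⟨⟨⟨_, _⟩, h1, _⟩, h2, h3⟩
      exact ⟨h1, h2, h3⟩
  have hNcard : latticeCount2 ((k:ℝ) • TriT D) = F.card := by
    rw [latticeCount2, hFeq, Set.ncard_coe_finset]
  -- fiberwise count
  have hmemF : ∀ x ∈ F, x.1 ∈ Finset.Icc (0:ℤ) ((k:ℤ)*D) := by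
    intro x hx
    rw [hF, Finset.mem_filter, Finset.mem_product] at hx
    exact hx.1.1
  have hcard : F.card = ∑ p ∈ Finset.Icc (0:ℤ) ((k:ℤ)*D),
      (F.filter (fun x => x.1 = p)).card :=
    Finset.card_eq_sum_card_fiberwise hmemF
  have hfib : ∀ p ∈ Finset.Icc (0:ℤ) ((k:ℤ)*D),
      (F.filter (fun x => x.1 = p)).card
        = (min (((D-1)*p)/D) (((k:ℤ)*D - p)/D) + 1).toNat := by
    intro p hp
    rw [Finset.mem_Icc] at hp
    have hfe : F.filter (fun x => x.1 = p)
        = {p} ×ˢ Finset.Icc 0 (min (((D-1)*p)/D) (((k:ℤ)*D - p)/D)) := by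
      ext ⟨a, b⟩
      rw [hF]
      simp only [Finset.mem_filter, Finset.mem_product, Finset.mem_Icc, Finset.mem_singleton]
      constructor
      · rintro ⟨⟨⟨⟨ha0, ha1⟩, hb0, hbk⟩, h2, h3⟩, rfl⟩
        refine ⟨rfl, hb0, le_min ?_ ?_⟩
        · rw [Int.le_ediv_iff_mul_le hD0]; linarith
        · rw [Int.le_ediv_iff_mul_le hD0]; linarith
      · rintro ⟨rfl, hb0, hbm⟩
        have hm1 := le_trans hbm (min_le_left _ _)
        have hm2 := le_trans hbm (min_le_right _ _)
        rw [Int.le_ediv_iff_mul_le hD0] at hm1 hm2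
        have hbk : b ≤ (k:ℤ) := by
          have : b * D ≤ (k:ℤ) * D := by linarith
          exact le_of_mul_le_mul_right this hD0
        exact ⟨⟨⟨⟨hp.1, hp.2⟩, hb0, hbk⟩, by linarith, by linarith⟩, rfl⟩
    rw [hfe, Finset.card_product, Finset.card_singleton, one_mul, Int.card_Icc, sub_zero]
  have hsum1 : (F.card : ℤ) = ∑ p ∈ Finset.Icc (0:ℤ) ((k:ℤ)*D),
      (min (((D-1)*p)/D) (((k:ℤ)*D - p)/D) + 1) := by
    rw [hcard, Finset.sum_congr rfl hfib, Nat.cast_sum]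
    apply Finset.sum_congr rfl
    intro p hp
    rw [Finset.mem_Icc] at hp
    rw [Int.toNat_of_nonneg]
    have e1 : 0 ≤ ((D-1)*p)/D := Int.ediv_nonneg (by nlinarith) hD0.le
    have e2 : 0 ≤ ((k:ℤ)*D - p)/D := Int.ediv_nonneg (by linarith) hD0.le
    have := le_min e1 e2
    omega
  have hterm : ∀ p ∈ Finset.Icc (0:ℤ) ((k:ℤ)*D),
      min (((D-1)*p)/D) (((k:ℤ)*D - p)/D) + 1 = min p (k:ℤ) + 1 + (-p)/D := by
    intro p _
    have e1 : ((D-1)*p)/D = p + (-p)/D := by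
      rw [show (D-1)*p = -p + p*D by ring, Int.add_mul_ediv_right _ _ (by omega : D ≠ 0)]
      ring
    have e2 : ((k:ℤ)*D - p)/D = (k:ℤ) + (-p)/D := by
      rw [show (k:ℤ)*D - p = -p + (k:ℤ)*D by ring, Int.add_mul_ediv_right _ _ (by omega : D ≠ 0)]
      ring
    rw [e1, e2, min_add_add_right]
    ring
  rw [hNcard, hsum1, Finset.sum_congr rfl hterm]
  rw [Finset.sum_add_distrib, Finset.sum_add_distrib]
  -- sum of min
  have hkD : (k:ℤ) ≤ (k:ℤ)*D := by nlinarith [Int.ofNat_nonneg k]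
  have hmin : ∑ p ∈ Finset.Icc (0:ℤ) ((k:ℤ)*D), min p (k:ℤ)
      = (∑ p ∈ Finset.Icc (0:ℤ) (k:ℤ), p) + ((k:ℤ)*D - (k:ℤ)) * (k:ℤ) := by
    rw [icc_split (k:ℤ) ((k:ℤ)*D) (Int.ofNat_nonneg k) hkD,
      Finset.sum_union (icc_disj _ _)]
    congr 1
    · apply Finset.sum_congr rfl
      intro p hp
      rw [Finset.mem_Icc] at hp
      exact min_eq_left hp.2
    · have hc : ∑ p ∈ Finset.Icc ((k:ℤ)+1) ((k:ℤ)*D), min p (k:ℤ)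
          = ∑ _p ∈ Finset.Icc ((k:ℤ)+1) ((k:ℤ)*D), (k:ℤ) :=
        Finset.sum_congr rfl (fun p hp => by
          rw [Finset.mem_Icc] at hp
          exact min_eq_right (by linarith [hp.1]))
      rw [hc, Finset.sum_const, Int.card_Icc, nsmul_eq_mul,
        Int.toNat_of_nonneg (by linarith)]
      ring
  have hone : ∑ _p ∈ Finset.Icc (0:ℤ) ((k:ℤ)*D), (1:ℤ) = (k:ℤ)*D + 1 := by
    rw [Finset.sum_const, Int.card_Icc, nsmul_eq_mul, Int.toNat_of_nonneg (by nlinarith), sub_zero]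
    ring
  rw [hmin, hone]
  have h1 := sum_id k
  have h2 := sum_ediv hD k
  push_cast at h1 h2 ⊢
  linear_combination h1 + h2

/-- The Ehrhart counting function of `T` is a genuine polynomial in `k`. -/
theorem stmt2 (D : ℤ) (hD : 2 ≤ D) :
    ∃ a b c : ℚ, ∀ k : ℕ, 1 ≤ k →
      (latticeCount2 ((k : ℝ) • TriT D) : ℚ) = a * k ^ 2 + b * k + c := by
  refine ⟨((D:ℚ)-1)/2, ((D:ℚ)+1)/2, 1, fun k hk => ?_⟩
  have h := count_eq D hD k hk
  have h' : (2:ℚ) * (latticeCount2 ((k:ℝ) • TriT D) : ℚ)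
      = ((D:ℚ)-1)*(k:ℚ)^2 + ((D:ℚ)+1)*(k:ℚ) + 2 := by exact_mod_cast h
  linear_combination h' / 2
end

section
/- The unimodular linear map with matrix [[1,0,0],[1,0,-1],[-1,1,2]] (which has determinant 1) maps the half-space {x ∈ ℝ³ : -x₁ + x₂ + x₃ ≥ 0} intersected with the pyramid P = conv{(0,0,0),(1,0,0),(1,1,0),(0,1,0),(1/2,0,1/2)} together with the complementary piece so that the resulting union is an integral polytope; consequently, for every integer k ≥ 1 the lattice point count |kP ∩ ℤ³| is a polynomial function of k. -/
/-!
The plane `-x₁ + x₂ + x₃ = 0` contains the apex `E = (1/2, 0, 1/2)` and the base diagonal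
from `0` to `(1, 1, 0)`, so it cuts `P` into the simplices `conv{(1,0,0), E, 0, (1,1,0)}` and
`conv{E, (0,1,0), 0, (1,1,0)}`. The unimodular map fixes `E`, `0` and `(1, 1, 0)` and sends
`(0, 1, 0)` to `(0, 0, 1)`; since `E` is the midpoint of `(1,0,0)` and `(0,0,1)`, the two pieces
reassemble into the lattice simplex `conv{(1,0,0), (0,0,1), 0, (1,1,0)}`.

The lattice points of `kP` are counted directly: those with `x₃ = 0` form a `(k+1) × (k+1)`
square, and translating the others by `(-1, 0, -1)` gives the lattice points of `(k-2)P`.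
Hence `6 |kP ∩ ℤ³| = (k+1)(k+2)(k+3)`.
-/

open Pointwise

/-- Number of integer lattice points of `ℤ³` lying in a subset of `ℝ³`. -/
noncomputable def latticeCount3 (S : Set (ℝ × ℝ × ℝ)) : ℕ :=
  {p : ℤ × ℤ × ℤ | ((p.1 : ℝ), (p.2.1 : ℝ), (p.2.2 : ℝ)) ∈ S}.ncard

/-- A subset of `ℝ³` is an integral polytope if it is the convex hull of
finitely many points of `ℤ³`. -/
def IsIntegralPolytope3 (S : Set (ℝ × ℝ × ℝ)) : Prop :=
  ∃ V : Set (ℤ × ℤ × ℤ), V.Finite ∧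
    S = convexHull ℝ ((fun p : ℤ × ℤ × ℤ => ((p.1 : ℝ), (p.2.1 : ℝ), (p.2.2 : ℝ))) '' V)

/-- Stanley's pyramid `P = conv{(0,0,0),(1,0,0),(1,1,0),(0,1,0),(1/2,0,1/2)}`. -/
noncomputable def Pyr : Set (ℝ × ℝ × ℝ) :=
  convexHull ℝ {(0, 0, 0), (1, 0, 0), (1, 1, 0), (0, 1, 0), (1 / 2, 0, 1 / 2)}

/-- The linear map with matrix `[[1,0,0],[1,0,-1],[-1,1,2]]`. -/
def Upyr (x : ℝ × ℝ × ℝ) : ℝ × ℝ × ℝ :=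
  (x.1, x.1 - x.2.2, -x.1 + x.2.1 + 2 * x.2.2)

open scoped Finset

section

variable {𝕜 E : Type*} [Field 𝕜] [LinearOrder 𝕜] [IsStrictOrderedRing 𝕜]
  [AddCommGroup E] [Module 𝕜 E]

theorem segment_eq_union_of_mem {a b c : E} (h : c ∈ segment 𝕜 a b) :
    segment 𝕜 a b = segment 𝕜 a c ∪ segment 𝕜 c b := by
  refine subset_antisymm (fun p hp => ?_) (Set.union_subset
    ((convex_segment a b).segment_subset (left_mem_segment 𝕜 a b) h)
    ((convex_segment a b).segment_subset h (right_mem_segment 𝕜 a b)))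
  rw [mem_segment_iff_wbtw] at h hp
  rw [Set.mem_union, mem_segment_iff_wbtw, mem_segment_iff_wbtw]
  obtain ⟨s, hs, rfl⟩ := hp
  obtain ⟨t, ht, rfl⟩ := h
  rcases wbtw_or_wbtw_smul_vadd_of_nonneg a (b -ᵥ a) hs.1 ht.1 with hpc | hcp
  · exact Or.inl hpc
  · exact Or.inr (Wbtw.trans_left_right (⟨s, hs, rfl⟩ : Wbtw 𝕜 a _ b) hcp)

theorem convexHull_insert_insert_eq_union {a b c : E} {s : Set E} (hs : s.Nonempty)
    (h : c ∈ segment 𝕜 a b) :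
    convexHull 𝕜 (insert a (insert b s)) =
      convexHull 𝕜 (insert a (insert c s)) ∪ convexHull 𝕜 (insert c (insert b s)) := by
  simp only [convexHull_insert (Set.insert_nonempty _ s), convexHull_insert hs,
    ← convexJoin_assoc, convexJoin_singletons]
  rw [segment_eq_union_of_mem h, convexJoin_union_left]

theorem smul_add_smul_add_smul_add_smul_mem_convexHull {x y z w : E} {a b c d : 𝕜}
    (ha : 0 ≤ a) (hb : 0 ≤ b) (hc : 0 ≤ c) (hd : 0 ≤ d) (habcd : a + b + c + d = 1) :
    a • x + b • y + c • z + d • w ∈ convexHull 𝕜 {x, y, z, w} := by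
  have hmem := (convex_convexHull 𝕜 {x, y, z, w}).sum_mem (t := Finset.univ)
    (w := ![a, b, c, d]) (z := ![x, y, z, w])
    (fun i _ => by fin_cases i <;> assumption)
    (by simp [Fin.sum_univ_four, habcd])
    (fun i _ => subset_convexHull 𝕜 _ (by fin_cases i <;> simp))
  simpa [Fin.sum_univ_four] using hmem

end

def pyrHalfspaces (k : ℝ) : Set (ℝ × ℝ × ℝ) :=
  {p | 0 ≤ p.2.2 ∧ 0 ≤ p.2.1 ∧ p.2.2 ≤ p.1 ∧ p.1 + p.2.2 ≤ k ∧ p.2.1 + 2 * p.2.2 ≤ k}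

theorem convex_pyrHalfspaces (k : ℝ) : Convex ℝ (pyrHalfspaces k) := by
  rintro p ⟨hp₁, hp₂, hp₃, hp₄, hp₅⟩ q ⟨hq₁, hq₂, hq₃, hq₄, hq₅⟩ a b ha hb hab
  simp only [pyrHalfspaces, Set.mem_ofPred_eq, Prod.fst_add, Prod.snd_add, Prod.smul_fst,
    Prod.smul_snd, smul_eq_mul]
  refine ⟨?_, ?_, ?_, ?_, ?_⟩ <;> nlinarith

theorem smul_pyrHalfspaces_one {t : ℝ} (ht : 0 < t) : t • pyrHalfspaces 1 = pyrHalfspaces t := by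
  ext p
  obtain ⟨q, rfl⟩ : ∃ q, t • q = p := ⟨t⁻¹ • p, smul_inv_smul₀ ht.ne' p⟩
  rw [Set.smul_mem_smul_set_iff₀ ht.ne']
  simp only [pyrHalfspaces, Set.mem_ofPred_eq, Prod.smul_fst, Prod.smul_snd, smul_eq_mul]
  constructor
  · rintro ⟨h₁, h₂, h₃, h₄, h₅⟩
    refine ⟨?_, ?_, ?_, ?_, ?_⟩ <;> nlinarith
  · rintro ⟨h₁, h₂, h₃, h₄, h₅⟩
    refine ⟨?_, ?_, ?_, ?_, ?_⟩ <;> nlinarith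

theorem isLinearMap_Upyr : IsLinearMap ℝ Upyr where
  map_add p q := by
    simp only [Upyr, Prod.fst_add, Prod.snd_add, Prod.mk_add_mk]
    ext <;> ring
  map_smul c p := by
    simp only [Upyr, Prod.smul_fst, Prod.smul_snd, Prod.smul_mk, smul_eq_mul]
    ext <;> ring

theorem isLinearMap_cut : IsLinearMap ℝ fun x : ℝ × ℝ × ℝ => -x.1 + x.2.1 + x.2.2 where
  map_add p q := by
    simp only [Prod.fst_add, Prod.snd_add]
    ring
  map_smul c p := by
    simp only [Prod.smul_fst, Prod.smul_snd, smul_eq_mul]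
    ring

theorem mem_convexHull_of_cut_nonneg {p : ℝ × ℝ × ℝ} (hp : p ∈ pyrHalfspaces 1)
    (hcut : 0 ≤ -p.1 + p.2.1 + p.2.2) :
    p ∈ convexHull ℝ {(1 / 2, 0, 1 / 2), (0, 1, 0), (0, 0, 0), (1, 1, 0)} := by
  obtain ⟨x, y, z⟩ := p
  obtain ⟨h₁, h₂, h₃, h₄, h₅⟩ := hp
  convert smul_add_smul_add_smul_add_smul_mem_convexHull (𝕜 := ℝ)
    (x := ((1 / 2 : ℝ), (0 : ℝ), (1 / 2 : ℝ))) (y := (0, 1, 0)) (z := (0, 0, 0)) (w := (1, 1, 0))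
    (a := 2 * z) (b := -x + y + z) (c := 1 - y - 2 * z) (d := x - z)
    (by linarith) hcut (by linarith) (by linarith) (by ring) using 1
  simp only [Prod.smul_mk, Prod.mk_add_mk, smul_eq_mul, Prod.mk.injEq]
  refine ⟨by ring, by ring, by ring⟩

theorem mem_convexHull_of_cut_nonpos {p : ℝ × ℝ × ℝ} (hp : p ∈ pyrHalfspaces 1)
    (hcut : -p.1 + p.2.1 + p.2.2 ≤ 0) :
    p ∈ convexHull ℝ {(1, 0, 0), (1 / 2, 0, 1 / 2), (0, 0, 0), (1, 1, 0)} := by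
  obtain ⟨x, y, z⟩ := p
  obtain ⟨h₁, h₂, h₃, h₄, h₅⟩ := hp
  convert smul_add_smul_add_smul_add_smul_mem_convexHull (𝕜 := ℝ)
    (x := ((1 : ℝ), (0 : ℝ), (0 : ℝ))) (y := (1 / 2, 0, 1 / 2)) (z := (0, 0, 0)) (w := (1, 1, 0))
    (a := x - y - z) (b := 2 * z) (c := 1 - x - z) (d := y)
    (by linarith) (by linarith) (by linarith) (by linarith) (by ring) using 1
  simp only [Prod.smul_mk, Prod.mk_add_mk, smul_eq_mul, Prod.mk.injEq]
  refine ⟨by ring, by ring, by ring⟩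

theorem Pyr_eq_pyrHalfspaces : Pyr = pyrHalfspaces 1 := by
  refine subset_antisymm (convexHull_min ?_ (convex_pyrHalfspaces 1)) fun p hp => ?_
  · rintro p (rfl | rfl | rfl | rfl | rfl) <;> norm_num [pyrHalfspaces]
  · rcases le_total 0 (-p.1 + p.2.1 + p.2.2) with hcut | hcut
    · refine convexHull_mono ?_ (mem_convexHull_of_cut_nonneg hp hcut)
      simp [Set.insert_subset_iff]
    · refine convexHull_mono ?_ (mem_convexHull_of_cut_nonpos hp hcut)
      simp [Set.insert_subset_iff]

theorem Pyr_inter_cut_nonneg : Pyr ∩ {x : ℝ × ℝ × ℝ | 0 ≤ -x.1 + x.2.1 + x.2.2} =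
    convexHull ℝ {(1 / 2, 0, 1 / 2), (0, 1, 0), (0, 0, 0), (1, 1, 0)} := by
  refine subset_antisymm ?_ (Set.subset_inter ?_ ?_)
  · rintro p ⟨hp, hcut⟩
    rw [Pyr_eq_pyrHalfspaces] at hp
    exact mem_convexHull_of_cut_nonneg hp hcut
  · exact convexHull_mono (by simp [Set.insert_subset_iff])
  · refine convexHull_min ?_ (convex_halfSpace_ge isLinearMap_cut 0)
    rintro p (rfl | rfl | rfl | rfl) <;> norm_num

theorem Pyr_inter_cut_nonpos : Pyr ∩ {x : ℝ × ℝ × ℝ | -x.1 + x.2.1 + x.2.2 ≤ 0} =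
    convexHull ℝ {(1, 0, 0), (1 / 2, 0, 1 / 2), (0, 0, 0), (1, 1, 0)} := by
  refine subset_antisymm ?_ (Set.subset_inter ?_ ?_)
  · rintro p ⟨hp, hcut⟩
    rw [Pyr_eq_pyrHalfspaces] at hp
    exact mem_convexHull_of_cut_nonpos hp hcut
  · exact convexHull_mono (by simp [Set.insert_subset_iff])
  · refine convexHull_min ?_ (convex_halfSpace_le isLinearMap_cut 0)
    rintro p (rfl | rfl | rfl | rfl) <;> norm_num

theorem Upyr_image_Pyr_inter_cut_nonneg :
    Upyr '' (Pyr ∩ {x : ℝ × ℝ × ℝ | 0 ≤ -x.1 + x.2.1 + x.2.2}) =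
      convexHull ℝ {(1 / 2, 0, 1 / 2), (0, 0, 1), (0, 0, 0), (1, 1, 0)} := by
  rw [Pyr_inter_cut_nonneg, isLinearMap_Upyr.image_convexHull]
  norm_num [Set.image_insert_eq, Upyr]

theorem union_eq_convexHull :
    Upyr '' (Pyr ∩ {x : ℝ × ℝ × ℝ | 0 ≤ -x.1 + x.2.1 + x.2.2}) ∪
        (Pyr ∩ {x : ℝ × ℝ × ℝ | -x.1 + x.2.1 + x.2.2 ≤ 0}) =
      convexHull ℝ {(1, 0, 0), (0, 0, 1), (0, 0, 0), (1, 1, 0)} := by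
  have hE : ((1 / 2 : ℝ), (0 : ℝ), (1 / 2 : ℝ)) ∈ segment ℝ (1, 0, 0) (0, 0, 1) :=
    ⟨1 / 2, 1 / 2, by norm_num, by norm_num, by norm_num, by norm_num⟩
  rw [Upyr_image_Pyr_inter_cut_nonneg, Pyr_inter_cut_nonpos, Set.union_comm,
    convexHull_insert_insert_eq_union (by simp) hE]

noncomputable def pyrLattice (k : ℕ) : Finset (ℤ × ℤ × ℤ) :=
  {p ∈ Finset.Icc 0 (k : ℤ) ×ˢ Finset.Icc 0 (k : ℤ) ×ˢ Finset.Icc 0 (k : ℤ) |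
    p.2.2 ≤ p.1 ∧ p.1 + p.2.2 ≤ k ∧ p.2.1 + 2 * p.2.2 ≤ k}

theorem mem_pyrLattice {k : ℕ} {p : ℤ × ℤ × ℤ} : p ∈ pyrLattice k ↔
    0 ≤ p.2.2 ∧ 0 ≤ p.2.1 ∧ p.2.2 ≤ p.1 ∧ p.1 + p.2.2 ≤ k ∧ p.2.1 + 2 * p.2.2 ≤ k := by
  simp only [pyrLattice, Finset.mem_filter, Finset.mem_product, Finset.mem_Icc]
  omega

theorem latticeCount3_smul_Pyr {k : ℕ} (hk : 1 ≤ k) :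
    latticeCount3 ((k : ℝ) • Pyr) = #(pyrLattice k) := by
  rw [latticeCount3, ← Set.ncard_coe_finset, Pyr_eq_pyrHalfspaces,
    smul_pyrHalfspaces_one (by exact_mod_cast hk)]
  congr 1
  ext p
  simp only [pyrHalfspaces, Set.mem_ofPred_eq, Finset.mem_coe, mem_pyrLattice]
  norm_cast

theorem card_pyrLattice_filter_eq_zero (k : ℕ) :
    #{p ∈ pyrLattice k | p.2.2 = 0} = (k + 1) ^ 2 := by
  have hcard : #(Finset.Icc (0 : ℤ) k) = k + 1 := by simp
  rw [sq, ← hcard, ← Finset.card_product]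
  refine Finset.card_nbij' (fun p => (p.1, p.2.1)) (fun q => (q.1, q.2, 0)) ?_ ?_ ?_ ?_
  · intro p hp
    simp only [Finset.coe_filter, mem_pyrLattice, Set.mem_ofPred_eq,
      Finset.coe_product, Set.mem_prod, Finset.coe_Icc, Set.mem_Icc] at hp ⊢
    omega
  · intro q hq
    simp only [Finset.coe_filter, mem_pyrLattice, Set.mem_ofPred_eq,
      Finset.coe_product, Set.mem_prod, Finset.coe_Icc, Set.mem_Icc, and_true] at hq ⊢
    omega
  · rintro ⟨x, y, z⟩ hp
    simp only [Finset.coe_filter, Set.mem_ofPred_eq] at hp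
    simp [hp.2]
  · intro q _
    rfl

theorem card_pyrLattice_add_two_filter_ne_zero (k : ℕ) :
    #{p ∈ pyrLattice (k + 2) | p.2.2 ≠ 0} = #(pyrLattice k) := by
  refine Finset.card_nbij' (fun p => (p.1 - 1, p.2.1, p.2.2 - 1))
    (fun p => (p.1 + 1, p.2.1, p.2.2 + 1)) ?_ ?_ ?_ ?_
  · intro p hp
    simp only [Finset.coe_filter, Finset.mem_coe, mem_pyrLattice, Set.mem_ofPred_eq,
      Nat.cast_add, Nat.cast_ofNat] at hp ⊢
    omega
  · intro p hp
    simp only [Finset.coe_filter, Finset.mem_coe, mem_pyrLattice, Set.mem_ofPred_eq,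
      Nat.cast_add, Nat.cast_ofNat] at hp ⊢
    omega
  · intro p _
    simp
  · intro p _
    simp

theorem card_pyrLattice_add_two (k : ℕ) :
    #(pyrLattice (k + 2)) = #(pyrLattice k) + (k + 3) ^ 2 := by
  rw [← Finset.card_filter_add_card_filter_not (fun p : ℤ × ℤ × ℤ => p.2.2 = 0),
    card_pyrLattice_filter_eq_zero, card_pyrLattice_add_two_filter_ne_zero]
  ring

theorem six_mul_card_pyrLattice (k : ℕ) :
    6 * #(pyrLattice k) = (k + 1) * (k + 2) * (k + 3) := by
  induction k using Nat.twoStepInduction with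
  | zero => decide
  | one => decide
  | more k ih _ => rw [card_pyrLattice_add_two, mul_add, ih]; ring

theorem stmt4 :
    Matrix.det !![(1 : ℤ), 0, 0; 1, 0, -1; -1, 1, 2] = 1 ∧
    IsIntegralPolytope3
      ((Upyr '' (Pyr ∩ {x : ℝ × ℝ × ℝ | 0 ≤ -x.1 + x.2.1 + x.2.2})) ∪
        (Pyr ∩ {x : ℝ × ℝ × ℝ | -x.1 + x.2.1 + x.2.2 ≤ 0})) ∧
    ∃ a b c d : ℚ, ∀ k : ℕ, 1 ≤ k →
      (latticeCount3 ((k : ℝ) • Pyr) : ℚ) = a * k ^ 3 + b * k ^ 2 + c * k + d := by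
  refine ⟨by simp [Matrix.det_fin_three], ⟨{(1, 0, 0), (0, 0, 1), (0, 0, 0), (1, 1, 0)},
    Set.toFinite _, ?_⟩, 1 / 6, 1, 11 / 6, 1, fun k hk => ?_⟩
  · rw [union_eq_convexHull]
    norm_num [Set.image_insert_eq]
  · have hcount : (6 * #(pyrLattice k) : ℚ) = (k + 1) * (k + 2) * (k + 3) := by
      exact_mod_cast six_mul_card_pyrLattice k
    rw [latticeCount3_smul_Pyr hk]
    linear_combination hcount / 6
end

section
/- For every integer D ≥ 2, there exists a convex rational polygon in ℝ² with denominator exactly D whose lattice-point counting function k ↦ |kP ∩ ℤ²| agrees with a polynomial for all positive integers k. -/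
open Pointwise

/-- A subset of `ℝ²` is an integral polytope if it is the convex hull of
finitely many points of `ℤ²`. -/
def IsIntegralPolytope2 (S : Set (ℝ × ℝ)) : Prop :=
  ∃ V : Set (ℤ × ℤ), V.Finite ∧
    S = convexHull ℝ ((fun p : ℤ × ℤ => ((p.1 : ℝ), (p.2 : ℝ))) '' V)

/-- A subset of `ℝ²` is a rational polygon if it is a two-dimensional convex
hull of finitely many points of `ℚ²`. -/
def IsRationalPolygon (P : Set (ℝ × ℝ)) : Prop :=
  (∃ V : Set (ℚ × ℚ), V.Finite ∧
    P = convexHull ℝ ((fun p : ℚ × ℚ => ((p.1 : ℝ), (p.2 : ℝ))) '' V)) ∧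
  ¬ Collinear ℝ P

/-! The witness is `T = conv {0, (1, (D - 1) / D), (D, 0)}`, whose dilate `c • T` is cut out by
`0 ≤ y`, `D y ≤ (D - 1) x` and `x + D y ≤ c D`. For `0 < m < D` these inequalities force
`D y ≤ m (D - 1)` on lattice points, with equality impossible since `D ∤ m (D - 1)`; so the hull of
the lattice points of `m • T` misses the vertex `(m, m (D - 1) / D)`. The lattice points of `k • T`
are counted column by column: column `x` holds `min x k + ⌊-x / D⌋ + 1` of them, and going from
`k` to `k + 1` adds `(D - 1) k + D` points, whence `2 L(k) = (D - 1) k² + (D + 1) k + 2`. -/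

theorem mem_convexHull_zero_insert_pair {𝕜 E : Type*} [Field 𝕜] [LinearOrder 𝕜]
    [IsStrictOrderedRing 𝕜] [AddCommGroup E] [Module 𝕜 E] {u v x : E} :
    x ∈ convexHull 𝕜 {0, u, v} ↔
      ∃ s t : 𝕜, 0 ≤ s ∧ 0 ≤ t ∧ s + t ≤ 1 ∧ s • u + t • v = x := by
  constructor
  · intro hx
    refine convexHull_min (t := {x | ∃ s t : 𝕜, 0 ≤ s ∧ 0 ≤ t ∧ s + t ≤ 1 ∧ s • u + t • v = x})
      ?_ ?_ hx
    · rintro y (rfl | rfl | rfl)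
      · exact ⟨0, 0, le_rfl, le_rfl, by simp, by simp⟩
      · exact ⟨1, 0, zero_le_one, le_rfl, by simp, by simp⟩
      · exact ⟨0, 1, le_rfl, zero_le_one, by simp, by simp⟩
    · rintro _ ⟨s, t, hs, ht, hst, rfl⟩ _ ⟨s', t', hs', ht', hst', rfl⟩ a b ha hb hab
      refine ⟨a * s + b * s', a * t + b * t', by positivity, by positivity, ?_, by module⟩
      nlinarith [mul_le_mul_of_nonneg_left hst ha, mul_le_mul_of_nonneg_left hst' hb]
  · rintro ⟨s, t, hs, ht, hst, rfl⟩
    have hconv := convex_convexHull 𝕜 ({0, u, v} : Set E)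
    have h0 : (0 : E) ∈ convexHull 𝕜 {0, u, v} := subset_convexHull 𝕜 _ (by simp)
    rcases (add_nonneg hs ht).eq_or_lt with hzero | hpos
    · obtain ⟨rfl, rfl⟩ : s = 0 ∧ t = 0 := ⟨by linarith, by linarith⟩
      simpa using h0
    · have hseg : (s / (s + t)) • u + (t / (s + t)) • v ∈ convexHull 𝕜 {0, u, v} :=
        hconv (subset_convexHull 𝕜 _ (by simp)) (subset_convexHull 𝕜 _ (by simp))
          (by positivity) (by positivity) (by field_simp)
      convert hconv.smul_mem_of_zero_mem h0 hseg ⟨hpos.le, hst⟩ using 1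
      simp only [smul_add, smul_smul, mul_div_cancel₀ _ hpos.ne']

theorem not_collinear_zero_of_det_ne_zero {𝕜 : Type*} [Field 𝕜] {u v : 𝕜 × 𝕜}
    (h : u.1 * v.2 - u.2 * v.1 ≠ 0) : ¬ Collinear 𝕜 {0, u, v} := by
  intro hcol
  obtain ⟨w, hw⟩ := (collinear_iff_of_mem (Set.mem_insert 0 _)).1 hcol
  obtain ⟨a, rfl⟩ := hw u (by simp)
  obtain ⟨b, rfl⟩ := hw v (by simp)
  apply h
  simp only [vadd_eq_add, add_zero, Prod.smul_fst, Prod.smul_snd, smul_eq_mul]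
  ring

def mcAllisterWoodsTriangle (d : ℝ) : Set (ℝ × ℝ) :=
  convexHull ℝ {0, (1, (d - 1) / d), (d, 0)}

theorem smul_mcAllisterWoodsTriangle {d c : ℝ} (hd : 1 < d) (hc : 0 < c) :
    c • mcAllisterWoodsTriangle d =
      {q | 0 ≤ q.2 ∧ d * q.2 ≤ (d - 1) * q.1 ∧ q.1 + d * q.2 ≤ c * d} := by
  have hd0 : d ≠ 0 := by positivity
  have hd1 : 0 < d - 1 := by linarith
  rw [mcAllisterWoodsTriangle, ← convexHull_smul, Set.smul_set_insert, Set.smul_set_insert,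
    Set.smul_set_singleton, smul_zero]
  ext ⟨x, y⟩
  simp only [mem_convexHull_zero_insert_pair, Prod.smul_mk, smul_eq_mul, Prod.mk_add_mk,
    Prod.mk.injEq, Set.mem_ofPred_eq, mul_zero]
  constructor
  · rintro ⟨s, t, hs, ht, hst, rfl, rfl⟩
    have hcd : 0 ≤ c * d := by positivity
    simp only [add_zero]
    refine ⟨by positivity, ?_, ?_⟩ <;> field_simp
    · nlinarith [mul_nonneg (mul_nonneg ht hcd) hd1.le]
    · nlinarith [mul_le_mul_of_nonneg_left hst hcd]
  · rintro ⟨hy, hyx, hxy⟩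
    refine ⟨d * y / (c * (d - 1)), (x - d * y / (d - 1)) / (c * d), by positivity,
      ?_, ?_, ?_, ?_⟩
    · exact div_nonneg (sub_nonneg.2 ((div_le_iff₀ hd1).2 (by linarith))) (by positivity)
    · rw [div_add_div _ _ (by positivity) (by positivity), div_le_one (by positivity)]
      field_simp
      nlinarith
    · field_simp; ring
    · field_simp; simp

theorem isRationalPolygon_mcAllisterWoodsTriangle {d : ℚ} (h0 : d ≠ 0) (h1 : d ≠ 1) :
    IsRationalPolygon (mcAllisterWoodsTriangle d) := by
  refine ⟨⟨{0, (1, (d - 1) / d), (d, 0)}, Set.toFinite _, ?_⟩, fun hcol => ?_⟩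
  · simp [mcAllisterWoodsTriangle, Set.image_insert_eq, Prod.mk_zero_zero]
  · refine not_collinear_zero_of_det_ne_zero ?_ (hcol.subset (subset_convexHull ℝ _))
    have : (d : ℝ) ≠ 0 := by exact_mod_cast h0
    field_simp
    intro h
    exact h1 (by exact_mod_cast (by linarith : (d : ℝ) = 1))

theorem isIntegralPolytope2_smul_mcAllisterWoodsTriangle {D : ℤ} (hD : D ≠ 0) :
    IsIntegralPolytope2 ((D : ℝ) • mcAllisterWoodsTriangle D) := by
  refine ⟨{0, (D, D - 1), (D * D, 0)}, Set.toFinite _, ?_⟩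
  have : (D : ℝ) ≠ 0 := by exact_mod_cast hD
  rw [mcAllisterWoodsTriangle, ← convexHull_smul]
  simp [Set.image_insert_eq, Set.smul_set_insert, mul_div_cancel₀ _ this, Prod.mk_zero_zero]

theorem IsIntegralPolytope2.subset_of_convex {S C : Set (ℝ × ℝ)} (hS : IsIntegralPolytope2 S)
    (hC : Convex ℝ C)
    (h : ∀ p : ℤ × ℤ, ((p.1 : ℝ), (p.2 : ℝ)) ∈ S → ((p.1 : ℝ), (p.2 : ℝ)) ∈ C) : S ⊆ C := by
  obtain ⟨V, -, rfl⟩ := hS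
  refine convexHull_min ?_ hC
  rintro _ ⟨p, hp, rfl⟩
  exact h p (subset_convexHull ℝ _ ⟨p, hp, rfl⟩)

theorem mem_smul_mcAllisterWoodsTriangle_iff {D c : ℤ} (hD : 1 < D) (hc : 0 < c) (p : ℤ × ℤ) :
    ((p.1 : ℝ), (p.2 : ℝ)) ∈ (c : ℝ) • mcAllisterWoodsTriangle D ↔
      0 ≤ p.2 ∧ D * p.2 ≤ (D - 1) * p.1 ∧ p.1 + D * p.2 ≤ c * D := by
  rw [smul_mcAllisterWoodsTriangle (by exact_mod_cast hD) (by exact_mod_cast hc)]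
  simp only [Set.mem_ofPred_eq]
  norm_cast

theorem not_isIntegralPolytope2_smul_mcAllisterWoodsTriangle {D m : ℤ} (hD : 1 < D) (hm : 0 < m)
    (hDm : ¬ D ∣ m) : ¬ IsIntegralPolytope2 ((m : ℝ) • mcAllisterWoodsTriangle D) := by
  intro hint
  have hC : Convex ℝ {q : ℝ × ℝ | (D : ℝ) * q.2 ≤ m * (D - 1) - 1} :=
    convex_halfSpace_le (f := fun q : ℝ × ℝ => (D : ℝ) * q.2)
      ⟨fun x y => mul_add _ _ _, fun c x => mul_left_comm _ _ _⟩ _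
  have hsub := hint.subset_of_convex hC fun p hp => by
    obtain ⟨hy, hyx, hxy⟩ := (mem_smul_mcAllisterWoodsTriangle_iff hD hm p).1 hp
    have hle : D * (D * p.2) ≤ D * (m * (D - 1)) := by nlinarith
    have hne : D * p.2 ≠ m * (D - 1) := fun h => hDm ⟨m - p.2, by linarith⟩
    have : D * p.2 ≤ m * (D - 1) - 1 := by
      have := le_of_mul_le_mul_left hle (by omega)
      omega
    simp only [Set.mem_ofPred_eq]
    exact_mod_cast this
  have hvertex : (m : ℝ) • ((1 : ℝ), ((D : ℝ) - 1) / D) ∈ (m : ℝ) • mcAllisterWoodsTriangle D :=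
    Set.smul_mem_smul_set (subset_convexHull ℝ _ (by simp))
  have hD0 : (D : ℝ) ≠ 0 := by exact_mod_cast (show D ≠ 0 by omega)
  have hbound := hsub hvertex
  simp only [Set.mem_ofPred_eq, Prod.smul_mk, smul_eq_mul] at hbound
  field_simp at hbound
  linarith

def triangleColumnTop (D k x : ℤ) : ℤ := min ((D - 1) * x / D) ((k * D - x) / D)

theorem le_triangleColumnTop_iff {D k x y : ℤ} (hD : 0 < D) :
    y ≤ triangleColumnTop D k x ↔ D * y ≤ (D - 1) * x ∧ x + D * y ≤ k * D := by
  rw [triangleColumnTop, le_min_iff, Int.le_ediv_iff_mul_le hD, Int.le_ediv_iff_mul_le hD]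
  constructor <;> rintro ⟨h1, h2⟩ <;> constructor <;> linarith

theorem triangleColumnTop_nonneg {D k x : ℤ} (hD : 0 < D) (hx0 : 0 ≤ x) (hxk : x ≤ k * D) :
    0 ≤ triangleColumnTop D k x :=
  (le_triangleColumnTop_iff hD).2 ⟨by nlinarith, by linarith⟩

noncomputable def triangleLattice (D : ℤ) (k : ℕ) : Finset (ℤ × ℤ) :=
  (Finset.Icc 0 (k * D)).biUnion fun x : ℤ => {x} ×ˢ Finset.Icc 0 (triangleColumnTop D k x)

theorem mem_triangleLattice {D : ℤ} (hD : 1 < D) {k : ℕ} {p : ℤ × ℤ} :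
    p ∈ triangleLattice D k ↔ 0 ≤ p.2 ∧ D * p.2 ≤ (D - 1) * p.1 ∧ p.1 + D * p.2 ≤ k * D := by
  obtain ⟨x, y⟩ := p
  simp only [triangleLattice, Finset.mem_biUnion, Finset.mem_product, Finset.mem_singleton,
    Finset.mem_Icc, le_triangleColumnTop_iff (by omega : 0 < D)]
  constructor
  · rintro ⟨x, -, rfl, hy, h⟩
    exact ⟨hy, h⟩
  · rintro ⟨hy, hyx, hxy⟩
    exact ⟨x, ⟨by nlinarith, by nlinarith⟩, rfl, hy, hyx, hxy⟩

theorem card_triangleLattice {D : ℤ} (hD : 0 < D) (k : ℕ) :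
    ((triangleLattice D k).card : ℤ) =
      ∑ x ∈ Finset.Icc 0 (k * D), (triangleColumnTop D k x + 1) := by
  rw [triangleLattice, Finset.card_biUnion]
  · push_cast
    refine Finset.sum_congr rfl fun x hx => ?_
    obtain ⟨hx0, hxk⟩ := Finset.mem_Icc.1 hx
    rw [Finset.card_product, Finset.card_singleton, one_mul,
      Int.card_Icc_of_le _ _ (by linarith [triangleColumnTop_nonneg hD hx0 hxk]), sub_zero]
  · intro x _ x' _ hxx'
    simp only [Function.onFun, Finset.disjoint_left, Finset.mem_product, Finset.mem_singleton]
    rintro p ⟨rfl, -⟩ ⟨h, -⟩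
    exact hxx' h

open Finset in
theorem Finset.sum_Icc_eq_sum_Icc_add_sum_Ioc {α M : Type*} [LinearOrder α]
    [LocallyFiniteOrder α] [AddCommMonoid M] (f : α → M) {a b c : α} (hab : a ≤ b) (hbc : b ≤ c) :
    ∑ x ∈ Icc a c, f x = ∑ x ∈ Icc a b, f x + ∑ x ∈ Ioc b c, f x := by
  rw [← sum_union (disjoint_left.2 fun x hx hx' => (mem_Icc.1 hx).2.not_gt (mem_Ioc.1 hx').1)]
  congr 1
  rw [← coe_inj, coe_union, coe_Icc, coe_Icc, coe_Ioc, Set.Icc_union_Ioc_eq_Icc hab hbc]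

theorem triangleColumnTop_eq {D : ℤ} (hD : D ≠ 0) (k x : ℤ) :
    triangleColumnTop D k x = min x k + (-x) / D := by
  rw [triangleColumnTop, show (D - 1) * x = -x + x * D by ring,
    show k * D - x = -x + k * D by ring, Int.add_mul_ediv_right _ _ hD,
    Int.add_mul_ediv_right _ _ hD, min_add_add_left, add_comm]

theorem triangleColumnTop_succ_of_le {D k x : ℤ} (hD : D ≠ 0) (hxk : x ≤ k) :
    triangleColumnTop D (k + 1) x = triangleColumnTop D k x := by
  rw [triangleColumnTop_eq hD, triangleColumnTop_eq hD, min_eq_left hxk,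
    min_eq_left (by linarith)]

theorem triangleColumnTop_succ_of_lt {D k x : ℤ} (hD : D ≠ 0) (hkx : k < x) :
    triangleColumnTop D (k + 1) x = triangleColumnTop D k x + 1 := by
  rw [triangleColumnTop_eq hD, triangleColumnTop_eq hD, min_eq_right (by linarith),
    min_eq_right hkx.le]
  ring

theorem triangleColumnTop_eq_zero {D k x : ℤ} (hD : 0 < D) (hx0 : 0 ≤ x) (hlt : k * D - D < x)
    (hle : x ≤ k * D) : triangleColumnTop D k x = 0 := by
  rw [triangleColumnTop, Int.ediv_eq_zero_of_lt (a := k * D - x) (by linarith) (by linarith)]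
  exact min_eq_right (Int.ediv_nonneg (by nlinarith) hD.le)

open Finset in
theorem two_mul_sum_triangleColumnTop {D : ℤ} (hD : 0 < D) (k : ℕ) :
    2 * ∑ x ∈ Icc 0 (k * D), (triangleColumnTop D k x + 1) =
      (D - 1) * k ^ 2 + (D + 1) * k + 2 := by
  induction k with
  | zero => simp [triangleColumnTop]
  | succ k ih =>
    have hk : (0 : ℤ) ≤ k := k.cast_nonneg
    have hkD : (k : ℤ) ≤ k * D := le_mul_of_one_le_right hk hD
    -- Columns `x ≤ k` are unchanged, columns `k < x ≤ k D` gain their top point, and the new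
    -- columns `k D < x ≤ (k + 1) D` consist of their bottom point only.
    have hstep : ∑ x ∈ Icc 0 ((k + 1 : ℕ) * D), (triangleColumnTop D (k + 1 : ℕ) x + 1) =
        ∑ x ∈ Icc 0 (k * D), (triangleColumnTop D k x + 1) + (k * D - k) + D := by
      push_cast
      rw [add_mul, one_mul,
        sum_Icc_eq_sum_Icc_add_sum_Ioc _ (b := (k : ℤ) * D) (by positivity) (by linarith),
        sum_Icc_eq_sum_Icc_add_sum_Ioc _ hk hkD,
        sum_Icc_eq_sum_Icc_add_sum_Ioc (fun x => triangleColumnTop D k x + 1) hk hkD]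
      have hlow : ∑ x ∈ Icc 0 (k : ℤ), (triangleColumnTop D (k + 1) x + 1) =
          ∑ x ∈ Icc 0 (k : ℤ), (triangleColumnTop D k x + 1) :=
        sum_congr rfl fun x hx => by rw [triangleColumnTop_succ_of_le hD.ne' (mem_Icc.1 hx).2]
      have hmid : ∑ x ∈ Ioc (k : ℤ) (k * D), (triangleColumnTop D (k + 1) x + 1) =
          ∑ x ∈ Ioc (k : ℤ) (k * D), (triangleColumnTop D k x + 1) + (k * D - k) := by
        rw [sum_congr rfl fun x hx => by
            rw [triangleColumnTop_succ_of_lt hD.ne' (mem_Ioc.1 hx).1, add_right_comm],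
          sum_add_distrib, sum_const, nsmul_one, Int.card_Ioc_of_le _ _ hkD]
      have hhigh : ∑ x ∈ Ioc (k * D) (k * D + D), (triangleColumnTop D (k + 1) x + 1) = D := by
        rw [sum_congr rfl fun x hx => by
            rw [triangleColumnTop_eq_zero hD (by linarith [(mem_Ioc.1 hx).1])
              (by linarith [(mem_Ioc.1 hx).1]) (by linarith [(mem_Ioc.1 hx).2]), zero_add],
          sum_const, nsmul_one, Int.card_Ioc_of_le _ _ (by linarith)]
        ring
      rw [hlow, hmid, hhigh]
      ring
    rw [hstep, mul_add, mul_add, ih]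
    push_cast
    ring

theorem two_mul_latticeCount2_smul_mcAllisterWoodsTriangle {D : ℤ} (hD : 1 < D) {k : ℕ}
    (hk : 0 < k) :
    2 * (latticeCount2 ((k : ℝ) • mcAllisterWoodsTriangle D) : ℤ) =
      (D - 1) * k ^ 2 + (D + 1) * k + 2 := by
  have hpoints : {p : ℤ × ℤ | ((p.1 : ℝ), (p.2 : ℝ)) ∈ (k : ℝ) • mcAllisterWoodsTriangle D} =
      triangleLattice D k := by
    ext p
    rw [Finset.mem_coe, mem_triangleLattice hD, Set.mem_ofPred_eq, ← Int.cast_natCast,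
      mem_smul_mcAllisterWoodsTriangle_iff hD (by exact_mod_cast hk)]
  rw [latticeCount2, hpoints, Set.ncard_coe_finset, card_triangleLattice (by omega),
    two_mul_sum_triangleColumnTop (by omega)]

/-- McAllister–Woods: for every `D ≥ 2` there is a rational polygon with
denominator exactly `D` whose Ehrhart counting function is a polynomial. -/
theorem stmt11 (D : ℤ) (hD : 2 ≤ D) :
    ∃ P : Set (ℝ × ℝ), IsRationalPolygon P ∧
      IsIntegralPolytope2 ((D : ℝ) • P) ∧
      (∀ m : ℤ, 0 < m → m < D → ¬ IsIntegralPolytope2 ((m : ℝ) • P)) ∧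
      ∃ a b c : ℚ, ∀ k : ℕ, 1 ≤ k →
        (latticeCount2 ((k : ℝ) • P) : ℚ) = a * k ^ 2 + b * k + c := by
  refine ⟨mcAllisterWoodsTriangle D, ?_,
    isIntegralPolytope2_smul_mcAllisterWoodsTriangle (by omega),
    fun m hm hmD => not_isIntegralPolytope2_smul_mcAllisterWoodsTriangle (by omega) hm
      fun hdvd => (Int.le_of_dvd hm hdvd).not_gt hmD,
    (D - 1) / 2, (D + 1) / 2, 1, fun k hk => ?_⟩
  · simpa using isRationalPolygon_mcAllisterWoodsTriangle (d := D) (by norm_cast; omega)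
      (by norm_cast; omega)
  · have hcount := congrArg (Int.cast : ℤ → ℚ)
      (two_mul_latticeCount2_smul_mcAllisterWoodsTriangle (D := D) (by omega) hk)
    push_cast at hcount
    linarith
end

section
/- Two rational polytopes P, Q ⊂ ℝⁿ are weakly GLₙ(ℤ)-equidecomposable if and only if there exists a positive integer k such that kP and kQ are GLₙ(ℤ)-equidecomposable (with translations in ℤⁿ). -/
open Pointwise

/-- Number of points of `ℤⁿ` lying in a subset of `ℝⁿ`. -/
noncomputable def latticeCount {n : ℕ} (S : Set (Fin n → ℝ)) : ℕ :=
  {p : Fin n → ℤ | (fun i => (p i : ℝ)) ∈ S}.ncard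

/-- A relatively open simplex. -/
def IsOpenSimplex {n : ℕ} (S : Set (Fin n → ℝ)) : Prop :=
  ∃ (d : ℕ) (v : Fin (d + 1) → (Fin n → ℝ)),
    AffineIndependent ℝ v ∧ S = intrinsicInterior ℝ (convexHull ℝ (Set.range v))

/-- An affine unimodular transformation `x ↦ Ax + v`, `A ∈ GLₙ(ℤ)`, `v ∈ ℤⁿ`. -/
def IsAffUnimodular {n : ℕ} (U : (Fin n → ℝ) → (Fin n → ℝ)) : Prop :=
  ∃ (A : Matrix (Fin n) (Fin n) ℤ) (v : Fin n → ℤ), IsUnit A.det ∧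
    ∀ x, U x = fun i => (∑ j, (A i j : ℝ) * x j) + (v i : ℝ)

/-- An affine transformation `x ↦ Ax + v` with `A ∈ GLₙ(ℤ)` and `v ∈ ℚⁿ`. -/
def IsAffUnimodularQ {n : ℕ} (U : (Fin n → ℝ) → (Fin n → ℝ)) : Prop :=
  ∃ (A : Matrix (Fin n) (Fin n) ℤ) (v : Fin n → ℚ), IsUnit A.det ∧
    ∀ x, U x = fun i => (∑ j, (A i j : ℝ) * x j) + (v i : ℝ)

/-- `GLₙ(ℤ)`-equidecomposability (integral translations). -/
def Equidecomposable {n : ℕ} (P Q : Set (Fin n → ℝ)) : Prop :=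
  ∃ (r : ℕ) (T : Fin r → Set (Fin n → ℝ)) (U : Fin r → (Fin n → ℝ) → (Fin n → ℝ)),
    (∀ i, IsOpenSimplex (T i)) ∧ (∀ i, IsAffUnimodular (U i)) ∧
    (Set.univ : Set (Fin r)).PairwiseDisjoint T ∧
    (Set.univ : Set (Fin r)).PairwiseDisjoint (fun i => U i '' T i) ∧
    P = ⋃ i, T i ∧ Q = ⋃ i, U i '' T i

/-- Weak `GLₙ(ℤ)`-equidecomposability (rational translations allowed). -/
def WeaklyEquidecomposable {n : ℕ} (P Q : Set (Fin n → ℝ)) : Prop :=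
  ∃ (r : ℕ) (T : Fin r → Set (Fin n → ℝ)) (U : Fin r → (Fin n → ℝ) → (Fin n → ℝ)),
    (∀ i, IsOpenSimplex (T i)) ∧ (∀ i, IsAffUnimodularQ (U i)) ∧
    (Set.univ : Set (Fin r)).PairwiseDisjoint T ∧
    (Set.univ : Set (Fin r)).PairwiseDisjoint (fun i => U i '' T i) ∧
    P = ⋃ i, T i ∧ Q = ⋃ i, U i '' T i

/-- A rational polytope in `ℝⁿ`. -/
def IsRationalPolytope {n : ℕ} (P : Set (Fin n → ℝ)) : Prop :=
  ∃ V : Set (Fin n → ℚ), V.Finite ∧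
    P = convexHull ℝ ((fun q : Fin n → ℚ => fun i => ((q i : ℝ))) '' V)

/-- An integral polytope in `ℝⁿ`. -/
def IsIntegralPolytope {n : ℕ} (P : Set (Fin n → ℝ)) : Prop :=
  ∃ V : Set (Fin n → ℤ), V.Finite ∧
    P = convexHull ℝ ((fun q : Fin n → ℤ => fun i => ((q i : ℝ))) '' V)


/-!
Scaling by `c ≠ 0` maps relatively open simplices to relatively open simplices and conjugates
`x ↦ Ax + v` into `x ↦ Ax + c v`, so a decomposition witnessing `P ~ Q` transports to one
witnessing `cP ~ cQ`. With `c = k` a common denominator of the finitely many rational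
translations these become integral; conversely, `c = k⁻¹` turns integral translations into
rational ones and brings `kP, kQ` back to `P, Q`.
-/

theorem intrinsicInterior_smul₀ {𝕜 V : Type*} [Field 𝕜] [TopologicalSpace 𝕜]
    [AddCommGroup V] [Module 𝕜 V] [TopologicalSpace V] [ContinuousConstSMul 𝕜 V]
    {c : 𝕜} (hc : c ≠ 0) (s : Set V) :
    intrinsicInterior 𝕜 (c • s) = c • intrinsicInterior 𝕜 s := by
  let e : V ≃L[𝕜] V := ContinuousLinearEquiv.smulLeft (Units.mk0 c hc)
  have he : ⇑e.toContinuousAffineEquiv = (c • ·) := rfl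
  simpa only [he, Set.image_smul] using e.toContinuousAffineEquiv.intrinsicInterior_image s

theorem IsOpenSimplex.smul {n : ℕ} {S : Set (Fin n → ℝ)} {c : ℝ} (hc : c ≠ 0)
    (h : IsOpenSimplex S) : IsOpenSimplex (c • S) := by
  obtain ⟨d, v, hv, rfl⟩ := h
  refine ⟨d, fun i => c • v i, ?_, ?_⟩
  · exact hv.map' (LinearMap.lsmul ℝ (Fin n → ℝ) c).toAffineMap (smul_right_injective _ hc)
  · rw [Set.range_smul, convexHull_smul, intrinsicInterior_smul₀ hc]

theorem Set.image_smul_set_of_map_smul {M α β : Type*} [SMul M α] [SMul M β] {f : α → β}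
    {g : α → β} {c : M} (h : ∀ x, f (c • x) = c • g x) (s : Set α) :
    f '' (c • s) = c • (g '' s) := by
  simp only [← Set.image_smul, Set.image_image, h]

theorem affine_translation_smul_apply_smul {n : ℕ} (A : Fin n → Fin n → ℝ) (b : Fin n → ℝ)
    (c : ℝ) (x : Fin n → ℝ) :
    (fun i => ∑ j, A i j * (c • x) j + c * b i) = c • fun i => ∑ j, A i j * x j + b i := by
  ext i
  simp only [Pi.smul_apply, smul_eq_mul, mul_add, Finset.mul_sum]
  congr 1
  exact Finset.sum_congr rfl fun j _ => by ring

/-- `Equidecomposable` and `WeaklyEquidecomposable`, with the class `p` of admissible maps as a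
parameter. -/
def DecomposableBy {n : ℕ} (p : ((Fin n → ℝ) → Fin n → ℝ) → Prop)
    (P Q : Set (Fin n → ℝ)) : Prop :=
  ∃ (r : ℕ) (T : Fin r → Set (Fin n → ℝ)) (U : Fin r → (Fin n → ℝ) → (Fin n → ℝ)),
    (∀ i, IsOpenSimplex (T i)) ∧ (∀ i, p (U i)) ∧
    (Set.univ : Set (Fin r)).PairwiseDisjoint T ∧
    (Set.univ : Set (Fin r)).PairwiseDisjoint (fun i => U i '' T i) ∧
    P = ⋃ i, T i ∧ Q = ⋃ i, U i '' T i

theorem equidecomposable_iff_decomposableBy {n : ℕ} {P Q : Set (Fin n → ℝ)} :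
    Equidecomposable P Q ↔ DecomposableBy IsAffUnimodular P Q := Iff.rfl

theorem weaklyEquidecomposable_iff_decomposableBy {n : ℕ} {P Q : Set (Fin n → ℝ)} :
    WeaklyEquidecomposable P Q ↔ DecomposableBy IsAffUnimodularQ P Q := Iff.rfl

namespace DecomposableBy

variable {n : ℕ} {P Q : Set (Fin n → ℝ)} {p p' : ((Fin n → ℝ) → Fin n → ℝ) → Prop}

theorem smul {c : ℝ} (hc : c ≠ 0) (h : ∀ U, p U → ∃ U', p' U' ∧ ∀ x, U' (c • x) = c • U x)
    (hPQ : DecomposableBy p P Q) : DecomposableBy p' (c • P) (c • Q) := by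
  obtain ⟨r, T, U, hT, hU, hTdisj, hUdisj, rfl, rfl⟩ := hPQ
  choose U' hU' hcomm using fun i => h (U i) (hU i)
  have himage : ∀ i, U' i '' (c • T i) = c • (U i '' T i) := fun i =>
    Set.image_smul_set_of_map_smul (hcomm i) (T i)
  have hinj : Function.Injective (c • · : (Fin n → ℝ) → Fin n → ℝ) := smul_right_injective _ hc
  refine ⟨r, fun i => c • T i, U', fun i => (hT i).smul hc, hU', ?_, ?_, ?_, ?_⟩
  · exact fun i _ j _ hij => (Set.disjoint_image_iff hinj).2 (hTdisj trivial trivial hij)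
  · intro i _ j _ hij
    simp only [Function.onFun, himage]
    exact (Set.disjoint_image_iff hinj).2 (hUdisj trivial trivial hij)
  · rw [Set.smul_set_iUnion]
  · simp only [himage, Set.smul_set_iUnion]

theorem exists_common_scale {q : ℕ → ((Fin n → ℝ) → Fin n → ℝ) → Prop}
    (h : ∀ U, p U → ∃ k, 0 < k ∧ ∀ m, k ∣ m → q m U) (hPQ : DecomposableBy p P Q) :
    ∃ k, 0 < k ∧ DecomposableBy (q k) P Q := by
  obtain ⟨r, T, U, hT, hU, hTdisj, hUdisj, hP, hQ⟩ := hPQ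
  choose k hk hq using fun i => h (U i) (hU i)
  refine ⟨∏ i, k i, Finset.prod_pos fun i _ => hk i, r, T, U, hT, fun i => ?_, hTdisj, hUdisj,
    hP, hQ⟩
  exact hq i _ (Finset.dvd_prod_of_mem k (Finset.mem_univ i))

end DecomposableBy

theorem Rat.exists_intCast_eq_mul_of_den_dvd {q : ℚ} {m : ℕ} (h : q.den ∣ m) :
    ∃ z : ℤ, (z : ℚ) = m * q := by
  obtain ⟨l, rfl⟩ := h
  refine ⟨l * q.num, ?_⟩
  push_cast
  rw [← Rat.mul_den_eq_num]
  ring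

theorem IsAffUnimodular.exists_intertwining_inv_natCast_smul {n : ℕ}
    {U : (Fin n → ℝ) → Fin n → ℝ} (hU : IsAffUnimodular U) (k : ℕ) :
    ∃ U', IsAffUnimodularQ U' ∧ ∀ x, U' ((k : ℝ)⁻¹ • x) = (k : ℝ)⁻¹ • U x := by
  obtain ⟨A, v, hA, hUx⟩ := hU
  refine ⟨fun x i => ∑ j, (A i j : ℝ) * x j + ((v i / k : ℚ) : ℝ), ⟨A, _, hA, fun _ => rfl⟩,
    fun x => ?_⟩
  rw [hUx, ← affine_translation_smul_apply_smul]
  ext i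
  push_cast
  ring

theorem IsAffUnimodularQ.exists_intertwining_natCast_smul {n : ℕ}
    {U : (Fin n → ℝ) → Fin n → ℝ} (hU : IsAffUnimodularQ U) : ∃ k, 0 < k ∧ ∀ m : ℕ, k ∣ m →
      ∃ U', IsAffUnimodular U' ∧ ∀ x, U' ((m : ℝ) • x) = (m : ℝ) • U x := by
  obtain ⟨A, v, hA, hUx⟩ := hU
  refine ⟨∏ i, (v i).den, Finset.prod_pos fun i _ => (v i).pos, fun m hm => ?_⟩
  have hden : ∀ i, (v i).den ∣ m := fun i =>
    (Finset.dvd_prod_of_mem (fun i => (v i).den) (Finset.mem_univ i)).trans hm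
  choose w hw using fun i => Rat.exists_intCast_eq_mul_of_den_dvd (hden i)
  have hwR : ∀ i, (w i : ℝ) = m * (v i : ℝ) := fun i => by exact_mod_cast hw i
  refine ⟨fun x i => ∑ j, (A i j : ℝ) * x j + w i, ⟨A, w, hA, fun _ => rfl⟩, fun x => ?_⟩
  simp only [hUx, ← affine_translation_smul_apply_smul, hwR]

theorem stmt13_general {n : ℕ} (P Q : Set (Fin n → ℝ)) :
    WeaklyEquidecomposable P Q ↔
      ∃ k : ℕ, 0 < k ∧ Equidecomposable ((k : ℝ) • P) ((k : ℝ) • Q) := by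
  simp only [weaklyEquidecomposable_iff_decomposableBy, equidecomposable_iff_decomposableBy]
  constructor
  · intro h
    obtain ⟨k, hk, hkPQ⟩ := h.exists_common_scale fun U hU => hU.exists_intertwining_natCast_smul
    exact ⟨k, hk, hkPQ.smul (Nat.cast_ne_zero.2 hk.ne') fun U hU => hU⟩
  · rintro ⟨k, hk, hkPQ⟩
    have hk' : (k : ℝ) ≠ 0 := Nat.cast_ne_zero.2 hk.ne'
    simpa only [inv_smul_smul₀ hk'] using
      hkPQ.smul (inv_ne_zero hk') fun U hU => hU.exists_intertwining_inv_natCast_smul k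

theorem stmt13 {n : ℕ} (P Q : Set (Fin n → ℝ))
    (hP : IsRationalPolytope P) (hQ : IsRationalPolytope Q) :
    WeaklyEquidecomposable P Q ↔
      ∃ k : ℕ, 0 < k ∧ Equidecomposable ((k : ℝ) • P) ((k : ℝ) • Q) :=
  stmt13_general P Q
end

section
/- (Ehrhart reciprocity for open simplices, used in the paper) If S is a d-dimensional open lattice simplex (the relative interior of the convex hull of d+1 affinely independent lattice points) in ℝⁿ, then the counting function k ↦ |kS ∩ ℤⁿ| is a polynomial in k for positive integers k. -/
open Pointwise

/-!
In barycentric weights, the points of `k • S` are the combinations `∑ μ i • v i` with all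
`μ i > 0` and `∑ μ i = k`, and such a point is integral iff `μ` lies in the lattice `Λ` of weights
for which `∑ μ i • (v i, 1)` is integral. As `Λ` is invariant under `ℤ^(d+1)`, each such `μ`
splits uniquely as `t + a` with `t` in the finite set `Λ ∩ (0, 1]^(d+1)` and `a ∈ ℕ^(d+1)` with
`∑ a = k - ∑ t`. So the count is `∑ₜ (k - ∑ t + d).choose d`, and each summand is a polynomial
in `k ≥ 1` because `∑ t` is an integer in `[1, d + 1]`.
-/

open Set Polynomial

def openStdSimplex (ι : Type*) [Fintype ι] (c : ℝ) : Set (ι → ℝ) :=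
  {w | (∀ i, 0 < w i) ∧ ∑ i, w i = c}

theorem smul_openStdSimplex {ι : Type*} [Fintype ι] {c : ℝ} (hc : 0 < c) (c' : ℝ) :
    c • openStdSimplex ι c' = openStdSimplex ι (c * c') := by
  ext w
  simp only [mem_smul_set_iff_inv_smul_mem₀ hc.ne', openStdSimplex, mem_ofPred_eq, Pi.smul_apply,
    smul_eq_mul, ← Finset.mul_sum, inv_mul_eq_iff_eq_mul₀ hc.ne']
  exact and_congr_left' (forall_congr' fun i => mul_pos_iff_of_pos_left (inv_pos.2 hc))

theorem convexHull_range_eq_image_stdSimplex {𝕜 ι E : Type*} [Field 𝕜] [LinearOrder 𝕜]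
    [IsStrictOrderedRing 𝕜] [Fintype ι] [AddCommGroup E] [Module 𝕜 E] (V : ι → E) :
    convexHull 𝕜 (range V) = Fintype.linearCombination 𝕜 V '' stdSimplex 𝕜 ι := by
  classical
  rw [← convexHull_rangle_single_eq_stdSimplex, LinearMap.image_convexHull, ← range_comp]
  congr 1
  ext i
  simp [Fintype.linearCombination_apply, Pi.single_apply]

theorem intrinsicInterior_eq_image_interior {𝕜 V P : Type*} [Ring 𝕜] [AddCommGroup V]
    [Module 𝕜 V] [TopologicalSpace P] [AddTorsor V P] {s : Set P} {Q : AffineSubspace 𝕜 P}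
    (hs : affineSpan 𝕜 s = Q) :
    intrinsicInterior 𝕜 s = (↑) '' interior ((↑) ⁻¹' s : Set Q) := by
  subst hs
  rfl

theorem AffineBasis.interior_setOf_coord_nonneg {ι V P : Type*} [Finite ι]
    [NormedAddCommGroup V] [NormedSpace ℝ V] [MetricSpace P] [NormedAddTorsor V P]
    (b : AffineBasis ι ℝ P) :
    interior {p | ∀ i, 0 ≤ b.coord i p} = {p | ∀ i, 0 < b.coord i p} := by
  have : FiniteDimensional ℝ V := b.finiteDimensional
  rcases subsingleton_or_nontrivial ι with hι | hι
  · have hrange : range b = univ :=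
      AffineSubspace.eq_univ_of_subsingleton_span_eq_top (subsingleton_range _) b.tot
    have hcoord (p : P) (i : ι) : b.coord i p = 1 := by
      obtain ⟨j, rfl⟩ : p ∈ range b := hrange ▸ mem_univ p
      rw [Subsingleton.elim i j, b.coord_apply_eq]
    simp [hcoord]
  · ext p
    simp only [ofPred_forall, interior_iInter_of_finite, mem_iInter, mem_ofPred_eq]
    refine forall_congr' fun i => ?_
    rw [show {p | 0 ≤ b.coord i p} = b.coord i ⁻¹' Ici 0 from rfl,
      ← (isOpenMap_barycentric_coord b i).preimage_interior_eq_interior_preimage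
        (continuous_barycentric_coord b i), interior_Ici]
    rfl

theorem AffineIndependent.intrinsicInterior_convexHull {ι E : Type*} [Fintype ι] [Nonempty ι]
    [NormedAddCommGroup E] [NormedSpace ℝ E] {V : ι → E} (hV : AffineIndependent ℝ V) :
    intrinsicInterior ℝ (convexHull ℝ (range V)) =
      Fintype.linearCombination ℝ V '' openStdSimplex ι 1 := by
  set L := Fintype.linearCombination ℝ V
  set Q := affineSpan ℝ (range V)
  have hVQ (i : ι) : V i ∈ Q := subset_affineSpan ℝ _ (mem_range_self i)
  let b : AffineBasis ι ℝ Q := ⟨fun i => ⟨V i, hVQ i⟩, hV.of_comp Q.subtype, by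
    rw [← affineSpan_coe_preimage_eq_top (range V)]
    congr 1
    ext q
    simp [Subtype.ext_iff]⟩
  have hsum (w : ι → ℝ) (hw : ∑ i, w i = 1) :
      (Finset.univ.affineCombination ℝ b w : E) = L w := by
    rw [← Q.subtype_apply, Finset.map_affineCombination _ _ _ hw,
      Finset.affineCombination_eq_linear_combination _ _ _ hw, Fintype.linearCombination_apply]
    rfl
  have hcoord (q : Q) (w : ι → ℝ) (hw : ∑ i, w i = 1) (hq : L w = q) :
      ∀ i, b.coord i q = w i := by
    intro i
    rw [show q = Finset.univ.affineCombination ℝ b w from Subtype.ext (by rw [hsum w hw, hq]),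
      b.coord_apply_combination_of_mem (Finset.mem_univ i) hw]
  have hcoe (q : Q) : L (fun i => b.coord i q) = q := by
    rw [← hsum _ (b.sum_coord_apply_eq_one q), b.affineCombination_coord_eq_self]
  have hpre : ((↑) ⁻¹' convexHull ℝ (range V) : Set Q) = {q | ∀ i, 0 ≤ b.coord i q} := by
    ext q
    rw [mem_preimage, convexHull_range_eq_image_stdSimplex]
    constructor
    · rintro ⟨w, ⟨hw0, hw1⟩, hwq⟩ i
      rw [hcoord q w hw1 hwq]
      exact hw0 i
    · exact fun hq => ⟨_, ⟨hq, b.sum_coord_apply_eq_one q⟩, hcoe q⟩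
  rw [intrinsicInterior_eq_image_interior (affineSpan_convexHull _), hpre,
    b.interior_setOf_coord_nonneg]
  ext x
  constructor
  · rintro ⟨q, hq, rfl⟩
    exact ⟨_, ⟨hq, b.sum_coord_apply_eq_one q⟩, hcoe q⟩
  · rintro ⟨w, ⟨hw0, hw1⟩, rfl⟩
    set q : Q := Finset.univ.affineCombination ℝ b w
    refine ⟨q, fun i => ?_, hsum w hw1⟩
    rw [hcoord q w hw1 (hsum w hw1).symm]
    exact hw0 i

section WeightLattice

variable {ι κ : Type*} [Fintype ι]

def weightLattice (v : ι → κ → ℤ) : Set (ι → ℝ) :=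
  {μ | ∀ m, ∃ z : ℤ, ∑ i, μ i * v i m = z}

theorem add_natCast_mem_weightLattice_iff (v : ι → κ → ℤ) (μ : ι → ℝ) (a : ι → ℕ) :
    μ + (fun i => (a i : ℝ)) ∈ weightLattice v ↔ μ ∈ weightLattice v := by
  have hsum (m : κ) : ∑ i, (μ + fun i => (a i : ℝ)) i * v i m =
      ∑ i, μ i * v i m + ((∑ i, a i * v i m : ℤ) : ℝ) := by
    push_cast
    simp only [Pi.add_apply, add_mul, Finset.sum_add_distrib]
  simp only [weightLattice, mem_ofPred_eq, hsum]
  refine forall_congr' fun m => ⟨fun ⟨z, hz⟩ => ⟨z - ∑ i, a i * v i m, ?_⟩,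
    fun ⟨z, hz⟩ => ⟨z + ∑ i, a i * v i m, ?_⟩⟩
  · rw [Int.cast_sub, ← hz]
    ring
  · rw [hz]
    push_cast
    ring

theorem abs_sum_mul_le {μ : ι → ℝ} (hμ : ∀ i, μ i ∈ Icc 0 1) (x : ι → ℝ) :
    |∑ i, μ i * x i| ≤ ∑ i, |x i| := by
  refine (Finset.abs_sum_le_sum_abs _ _).trans (Finset.sum_le_sum fun i _ => ?_)
  obtain ⟨h0, h1⟩ := hμ i
  rw [abs_mul, abs_of_nonneg h0]
  exact mul_le_of_le_one_left (abs_nonneg _) h1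

theorem finite_weightLattice_inter_pi_Ioc [Fintype κ] (v : ι → κ → ℤ)
    (hv : Function.Injective fun (μ : ι → ℝ) m => ∑ i, μ i * v i m) :
    (weightLattice v ∩ univ.pi fun _ => Ioc 0 1).Finite := by
  classical
  set C : κ → ℤ := fun m => ∑ i, |v i m|
  refine Set.Finite.of_finite_image (((Set.finite_Icc (-C) C).image
    fun (z : κ → ℤ) m => (z m : ℝ)).subset ?_) hv.injOn
  rintro _ ⟨μ, ⟨hμ, hμ01⟩, rfl⟩
  choose z hz using hμ
  refine ⟨z, ?_, funext fun m => (hz m).symm⟩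
  have hbound (m : κ) : |z m| ≤ C m := by
    have := abs_sum_mul_le (fun i => Ioc_subset_Icc_self (hμ01 i (mem_univ i)))
      fun i => (v i m : ℝ)
    rw [hz m] at this
    exact_mod_cast this
  exact ⟨fun m => (abs_le.1 (hbound m)).1, fun m => (abs_le.1 (hbound m)).2⟩

end WeightLattice

section Decomposition

variable {ι : Type*} [Fintype ι]

theorem natCeil_add_natCast_sub_one {t : ℝ} (ht : t ∈ Ioc 0 1) (a : ℕ) : ⌈t + a⌉₊ - 1 = a := by
  rw [Nat.ceil_add_natCast ht.1.le,
    (Nat.ceil_eq_iff one_ne_zero).2 ⟨by simpa using ht.1, by simpa using ht.2⟩]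
  omega

theorem sub_natCeil_sub_one_mem_Ioc {x : ℝ} (hx : 0 < x) : x - (⌈x⌉₊ - 1 : ℕ) ∈ Ioc 0 1 := by
  rw [Nat.cast_sub (Nat.one_le_ceil_iff.2 hx), Nat.cast_one]
  exact ⟨by linarith [Nat.ceil_lt_add_one hx.le], by linarith [Nat.le_ceil x]⟩

/-- `μ = t + a` with `t i ∈ (0, 1]` and `a i = ⌈μ i⌉₊ - 1 ∈ ℕ`. -/
noncomputable def interOpenStdSimplexEquiv {Λ : Set (ι → ℝ)}
    (hΛ : ∀ μ (a : ι → ℕ), μ + (fun i => (a i : ℝ)) ∈ Λ ↔ μ ∈ Λ) (c : ℝ) :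
    ↥(Λ ∩ openStdSimplex ι c) ≃ Σ t : ↥(Λ ∩ univ.pi fun _ => Ioc 0 1),
      {a : ι → ℕ // ∑ i, (t : ι → ℝ) i + ∑ i, (a i : ℝ) = c} where
  toFun μ :=
    have hsplit : (μ.1 - fun i => ((⌈μ.1 i⌉₊ - 1 : ℕ) : ℝ)) + (fun i => ((⌈μ.1 i⌉₊ - 1 : ℕ) : ℝ))
        = μ.1 := sub_add_cancel _ _
    ⟨⟨_, (hΛ _ _).1 (hsplit ▸ μ.2.1),
      fun i _ => sub_natCeil_sub_one_mem_Ioc (μ.2.2.1 i)⟩,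
      ⟨fun i => ⌈μ.1 i⌉₊ - 1, Finset.sum_add_distrib.symm.trans <| by
        simpa only [Pi.sub_apply, sub_add_cancel] using μ.2.2.2⟩⟩
  invFun x := ⟨x.1.1 + fun i => (x.2.1 i : ℝ), (hΛ _ _).2 x.1.2.1,
    fun i => add_pos_of_pos_of_nonneg (x.1.2.2 i (mem_univ i)).1 (Nat.cast_nonneg _),
    Finset.sum_add_distrib.trans x.2.2⟩
  left_inv μ := Subtype.ext (sub_add_cancel _ _)
  right_inv x := by
    have hceil (i : ι) : ⌈x.1.1 i + x.2.1 i⌉₊ - 1 = x.2.1 i :=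
      natCeil_add_natCast_sub_one (x.1.2.2 i (mem_univ i)) _
    refine Sigma.subtype_ext (Subtype.ext (funext fun i => ?_)) (funext hceil)
    simp [hceil]

theorem finite_setOf_add_sum_eq {s : ℝ} (hs : 0 ≤ s) (c : ℝ) :
    {a : ι → ℕ | s + ∑ i, (a i : ℝ) = c}.Finite := by
  refine (Set.Finite.pi fun _ => Set.finite_Iic ⌊c⌋₊).subset fun a ha i _ => Nat.le_floor ?_
  calc (a i : ℝ) ≤ ∑ j, (a j : ℝ) :=
        Finset.single_le_sum (fun j _ => Nat.cast_nonneg (a j)) (Finset.mem_univ i)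
    _ ≤ c := by rw [← ha]; linarith

theorem card_inter_openStdSimplex {Λ : Set (ι → ℝ)}
    (hΛ : ∀ μ (a : ι → ℕ), μ + (fun i => (a i : ℝ)) ∈ Λ ↔ μ ∈ Λ)
    [Fintype ↥(Λ ∩ univ.pi fun _ => Ioc 0 1)] (c : ℝ) :
    Nat.card ↥(Λ ∩ openStdSimplex ι c) = ∑ t : ↥(Λ ∩ univ.pi fun _ => Ioc 0 1),
      Nat.card {a : ι → ℕ // ∑ i, (t : ι → ℝ) i + ∑ i, (a i : ℝ) = c} := by
  have (t : ↥(Λ ∩ univ.pi fun _ => Ioc 0 1)) :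
      Finite {a : ι → ℕ // ∑ i, (t : ι → ℝ) i + ∑ i, (a i : ℝ) = c} :=
    (finite_setOf_add_sum_eq (Finset.sum_nonneg fun i _ => (t.2.2 i (mem_univ i)).1.le)
      c).to_subtype
  rw [Nat.card_congr (interOpenStdSimplexEquiv hΛ c), Nat.card_sigma]

end Decomposition

section StarsAndBars

variable {ι : Type*} [Fintype ι]

theorem card_sum_eq (m : ℕ) :
    Nat.card {a : ι → ℕ // ∑ i, a i = m} = (Fintype.card ι + m - 1).choose m := by
  classical
  rw [← Nat.card_congr (Sym.equivNatSumOfFintype ι m), Nat.card_eq_fintype_card,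
    Sym.card_sym_eq_choose]

theorem card_add_sum_eq {d j k : ℕ} (hι : Fintype.card ι = d + 1) (hj : j ≤ k + d) :
    Nat.card {a : ι → ℕ // j + ∑ i, a i = k} = (k + d - j).choose d := by
  rcases le_or_gt j k with hjk | hkj
  · have e : {a : ι → ℕ // j + ∑ i, a i = k} ≃ {a : ι → ℕ // ∑ i, a i = k - j} :=
      Equiv.subtypeEquivRight fun a => by omega
    rw [Nat.card_congr e, card_sum_eq, hι, show d + 1 + (k - j) - 1 = k + d - j by omega,
      Nat.choose_symm_of_eq_add (show k + d - j = k - j + d by omega)]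
  · have : IsEmpty {a : ι → ℕ // j + ∑ i, a i = k} := ⟨fun a => by omega⟩
    rw [Nat.card_of_isEmpty, Nat.choose_eq_zero_of_lt (by omega)]

theorem exists_polynomial_eval_choose (d j : ℕ) :
    ∃ P : ℚ[X], ∀ k : ℕ, j ≤ k + d → P.eval (k : ℚ) = (k + d - j).choose d := by
  refine ⟨C (d.factorial : ℚ)⁻¹ * (descPochhammer ℚ d).comp (X + C ((d : ℚ) - j)), fun k hk => ?_⟩
  have hcast : (k : ℚ) + ((d : ℚ) - j) = ((k + d - j : ℕ) : ℚ) := by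
    rw [Nat.cast_sub hk]
    push_cast
    ring
  rw [eval_mul, eval_C, eval_comp, eval_add, eval_X, eval_C, hcast,
    descPochhammer_eval_eq_descFactorial, Nat.descFactorial_eq_factorial_mul_choose, Nat.cast_mul,
    inv_mul_cancel_left₀ (by positivity)]

theorem exists_polynomial_card_add_sum_eq {d : ℕ} (hι : Fintype.card ι = d + 1) {t : ι → ℝ}
    (ht : t ∈ univ.pi fun _ => Ioc 0 1) (hint : ∃ z : ℤ, ∑ i, t i = z) :
    ∃ P : ℚ[X], ∀ k : ℕ, 1 ≤ k →
      (Nat.card {a : ι → ℕ // ∑ i, t i + ∑ i, (a i : ℝ) = k} : ℚ) = P.eval (k : ℚ) := by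
  obtain ⟨z, hz⟩ := hint
  have hsum_le : ∑ i, t i ≤ d + 1 := by
    calc ∑ i, t i ≤ ∑ _i : ι, (1 : ℝ) := Finset.sum_le_sum fun i _ => (ht i (mem_univ i)).2
      _ = d + 1 := by simp [hι]
  have hsum_nonneg : 0 ≤ ∑ i, t i := Finset.sum_nonneg fun i _ => (ht i (mem_univ i)).1.le
  lift z to ℕ using by exact_mod_cast hz ▸ hsum_nonneg
  have hzd : z ≤ d + 1 := by exact_mod_cast hz ▸ hsum_le
  obtain ⟨P, hP⟩ := exists_polynomial_eval_choose d z
  refine ⟨P, fun k hk => ?_⟩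
  rw [hP k (by omega), ← card_add_sum_eq hι (by omega)]
  refine congrArg _ (Nat.card_congr (Equiv.subtypeEquivRight fun a => ?_))
  rw [hz]
  exact_mod_cast Iff.rfl

end StarsAndBars

section ConeOverSimplex

variable {ι κ : Type*} [Fintype ι]

/-- The lift of `v i` to `(v i, 1)`: the extra coordinate `none` records the sum of the weights. -/
def coneGenerators (v : ι → κ → ℤ) : ι → Option κ → ℤ := fun i m => m.elim 1 (v i)

theorem sum_mul_coneGenerators_none (v : ι → κ → ℤ) (μ : ι → ℝ) :
    ∑ i, μ i * (coneGenerators v i none : ℝ) = ∑ i, μ i := by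
  simp [coneGenerators]

theorem sum_mul_coneGenerators_some (v : ι → κ → ℤ) (μ : ι → ℝ) (m : κ) :
    ∑ i, μ i * (coneGenerators v i (some m) : ℝ) =
      Fintype.linearCombination ℝ (fun i j => (v i j : ℝ)) μ m := by
  simp [coneGenerators, Fintype.linearCombination_apply, Finset.sum_apply]

theorem injective_coneGenerators {v : ι → κ → ℤ}
    (hv : AffineIndependent ℝ fun i j => (v i j : ℝ)) :
    Function.Injective fun (μ : ι → ℝ) m => ∑ i, μ i * coneGenerators v i m := by
  intro μ μ' h
  have hsum := congrFun h none
  have hcomb (m : κ) := congrFun h (some m)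
  simp only [sum_mul_coneGenerators_none, sum_mul_coneGenerators_some] at hsum hcomb
  funext i
  refine hv.eq_of_sum_eq_sum hsum ?_ i (Finset.mem_univ i)
  simpa only [Fintype.linearCombination_apply] using funext hcomb

theorem latticeCount_image_openStdSimplex {n : ℕ} {v : ι → Fin n → ℤ}
    (hv : AffineIndependent ℝ fun i j => (v i j : ℝ)) (k : ℕ) :
    latticeCount (Fintype.linearCombination ℝ (fun i j => (v i j : ℝ)) '' openStdSimplex ι k) =
      Nat.card ↥(weightLattice (coneGenerators v) ∩ openStdSimplex ι k) := by
  set L := Fintype.linearCombination ℝ fun i j => (v i j : ℝ)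
  set cast : (Fin n → ℤ) → Fin n → ℝ := fun p i => (p i : ℝ)
  have hcast : Function.Injective cast := Int.cast_injective.comp_left
  have hinj : InjOn L (weightLattice (coneGenerators v) ∩ openStdSimplex ι k) := by
    rintro μ ⟨-, -, hμ⟩ μ' ⟨-, -, hμ'⟩ h
    funext i
    refine hv.eq_of_sum_eq_sum (hμ.trans hμ'.symm) ?_ i (Finset.mem_univ i)
    simpa only [L, Fintype.linearCombination_apply] using h
  have himage : L '' (weightLattice (coneGenerators v) ∩ openStdSimplex ι k) =
      L '' openStdSimplex ι k ∩ range cast := by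
    ext x
    constructor
    · rintro ⟨μ, ⟨hμΛ, hμ⟩, rfl⟩
      choose z hz using fun m => hμΛ (some m)
      simp only [sum_mul_coneGenerators_some] at hz
      exact ⟨⟨μ, hμ, rfl⟩, z, funext fun m => (hz m).symm⟩
    · rintro ⟨⟨μ, hμ, rfl⟩, p, hp⟩
      refine ⟨μ, ⟨fun m => ?_, hμ⟩, rfl⟩
      cases m with
      | none => exact ⟨k, by rw [sum_mul_coneGenerators_none, hμ.2]; rfl⟩
      | some m => exact ⟨p m, by rw [sum_mul_coneGenerators_some, ← hp]⟩
  rw [Nat.card_coe_set_eq, ← hinj.ncard_image, himage,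
    ← ncard_preimage_of_injective_subset_range hcast inter_subset_right, latticeCount]
  congr 1
  ext p
  exact ⟨fun hp => ⟨hp, p, rfl⟩, fun hp => hp.1⟩

end ConeOverSimplex

/-- The counting function of an open lattice simplex is a polynomial. -/
theorem stmt16 {n d : ℕ} (v : Fin (d + 1) → (Fin n → ℤ))
    (hv : AffineIndependent ℝ (fun i => fun j => ((v i j : ℝ))))
    (S : Set (Fin n → ℝ))
    (hS : S = intrinsicInterior ℝ
      (convexHull ℝ (Set.range (fun i => fun j => ((v i j : ℝ)))))) :
    ∃ p : Polynomial ℚ, ∀ k : ℕ, 1 ≤ k →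
      (latticeCount ((k : ℝ) • S) : ℚ) = p.eval (k : ℚ) := by
  have hfin := finite_weightLattice_inter_pi_Ioc _ (injective_coneGenerators hv)
  have := hfin.fintype
  choose P hP using fun t : ↥(weightLattice (coneGenerators v) ∩ univ.pi fun _ => Ioc 0 1) =>
    exists_polynomial_card_add_sum_eq (Fintype.card_fin (d + 1)) t.2.2
      (by simpa only [sum_mul_coneGenerators_none] using t.2.1 none)
  refine ⟨∑ t, P t, fun k hk => ?_⟩
  have hkS : (k : ℝ) • S =
      Fintype.linearCombination ℝ (fun i j => (v i j : ℝ)) '' openStdSimplex _ k := by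
    rw [hS, hv.intrinsicInterior_convexHull, ← image_smul_set,
      smul_openStdSimplex (by positivity), mul_one]
  rw [hkS, latticeCount_image_openStdSimplex hv, card_inter_openStdSimplex
    (add_natCast_mem_weightLattice_iff _), Nat.cast_sum, eval_finsetSum]
  exact Finset.sum_congr rfl fun t _ => hP t k hk
end

section
/- Every rational polytope P in ℝ¹ (a closed interval [a,b] with a ≤ b rational) has the following property: the minimum quasi-period of its lattice-point counting function k ↦ |k[a,b] ∩ ℤ| equals the denominator of P; i.e., quasi-period collapse cannot occur in dimension 1. -/
/-- Number of integers in the `k`-th dilate of the rational interval `[a,b]`. -/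
noncomputable def intervalCount (a b : ℚ) (k : ℤ) : ℕ :=
  {z : ℤ | (k : ℚ) * a ≤ (z : ℚ) ∧ (z : ℚ) ≤ (k : ℚ) * b}.ncard

/-- `N` is a quasi-period of the counting function of `[a,b]`: the counting
function is given by a degree-≤1 quasi-polynomial whose coefficient functions
are periodic with period `N`. -/
def IsQuasiPeriod (a b : ℚ) (N : ℕ) : Prop :=
  ∃ c₀ c₁ : ℤ → ℚ, (∀ j : ℤ, c₀ (j + N) = c₀ j) ∧ (∀ j : ℤ, c₁ (j + N) = c₁ j) ∧
    ∀ k : ℤ, 0 < k → (intervalCount a b k : ℚ) = c₁ k * (k : ℚ) + c₀ k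

/-!
With the defect `F k = fract (k b) + fract (-k a) ∈ [0, 2)` (`intervalDefect`), the count is
`k (b - a) + 1 - F k`. If `d a, d b ∈ ℤ` then `F` is `d`-periodic, so `d` is a quasi-period.
Conversely, if `N` is a quasi-period, then along `k, k + N, k + 2N, …` the coefficients are
frozen, so the bounded function `F` is affine, hence constant; comparing `F` at a multiple `k₀`
of `N` with `k₀ a, k₀ b ∈ ℤ` and at `k₀ + N` gives `F N = 0`, i.e. `N a, N b ∈ ℤ`.
-/

theorem Rat.fract_eq_zero_iff_den_eq_one (q : ℚ) : Int.fract q = 0 ↔ q.den = 1 := by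
  rw [Int.fract_eq_zero_iff]
  exact ⟨fun ⟨z, hz⟩ => hz ▸ Rat.den_intCast z,
    fun h => ⟨q.num, Rat.coe_int_num_of_den_eq_one h⟩⟩

theorem eq_zero_of_forall_abs_nat_mul_le {K : Type*} [Field K] [LinearOrder K]
    [IsStrictOrderedRing K] [Archimedean K] {B C : K} (h : ∀ n : ℕ, |n * B| ≤ C) : B = 0 := by
  by_contra hB
  obtain ⟨n, hn⟩ := exists_nat_gt (C / |B|)
  rw [div_lt_iff₀ (abs_pos.2 hB)] at hn
  have := h n
  rw [abs_mul, Nat.abs_cast] at this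
  linarith

noncomputable def intervalDefect (a b : ℚ) (k : ℤ) : ℚ :=
  Int.fract ((k : ℚ) * b) + Int.fract (-((k : ℚ) * a))

section intervalDefect

variable {a b : ℚ}

theorem intervalDefect_nonneg (k : ℤ) : 0 ≤ intervalDefect a b k :=
  add_nonneg (Int.fract_nonneg _) (Int.fract_nonneg _)

theorem intervalDefect_lt_two (k : ℤ) : intervalDefect a b k < 2 := by
  have := Int.fract_lt_one ((k : ℚ) * b)
  have := Int.fract_lt_one (-((k : ℚ) * a))
  unfold intervalDefect
  linarith

theorem intervalDefect_eq_zero_iff {k : ℤ} :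
    intervalDefect a b k = 0 ↔
      Int.fract ((k : ℚ) * a) = 0 ∧ Int.fract ((k : ℚ) * b) = 0 := by
  rw [intervalDefect, add_eq_zero_iff_of_nonneg (Int.fract_nonneg _) (Int.fract_nonneg _),
    Int.fract_neg_eq_zero, and_comm]

theorem intervalDefect_eq_zero_iff_den {k : ℤ} :
    intervalDefect a b k = 0 ↔ ((k : ℚ) * a).den = 1 ∧ ((k : ℚ) * b).den = 1 := by
  rw [intervalDefect_eq_zero_iff, Rat.fract_eq_zero_iff_den_eq_one,
    Rat.fract_eq_zero_iff_den_eq_one]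

theorem intervalDefect_add_of_eq_zero {m : ℤ} (hm : intervalDefect a b m = 0) (k : ℤ) :
    intervalDefect a b (m + k) = intervalDefect a b k := by
  obtain ⟨ha, hb⟩ := intervalDefect_eq_zero_iff.1 hm
  obtain ⟨za, hza⟩ := Int.fract_eq_zero_iff.1 ha
  obtain ⟨zb, hzb⟩ := Int.fract_eq_zero_iff.1 hb
  simp only [intervalDefect, Int.cast_add, add_mul, neg_add, ← hza, ← hzb, ← Int.cast_neg,
    Int.fract_intCast_add]

theorem intervalDefect_den_mul_den_mul (k : ℤ) :
    intervalDefect a b (a.den * b.den * k) = 0 := by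
  refine intervalDefect_eq_zero_iff.2 ⟨Int.fract_eq_zero_iff.2 ⟨b.den * k * a.num, ?_⟩,
    Int.fract_eq_zero_iff.2 ⟨a.den * k * b.num, ?_⟩⟩
  · push_cast
    rw [← Rat.mul_den_eq_num]
    ring
  · push_cast
    rw [← Rat.mul_den_eq_num]
    ring

theorem intervalCount_eq (hab : a ≤ b) {k : ℤ} (hk : 0 ≤ k) :
    (intervalCount a b k : ℚ) = k * (b - a) + 1 - intervalDefect a b k := by
  have hset : {z : ℤ | (k : ℚ) * a ≤ z ∧ (z : ℚ) ≤ k * b} =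
      Finset.Icc ⌈(k : ℚ) * a⌉ ⌊(k : ℚ) * b⌋ := by
    ext z
    simp [Int.ceil_le, Int.le_floor]
  have hle : ⌈(k : ℚ) * a⌉ ≤ ⌊(k : ℚ) * b⌋ + 1 :=
    (Int.ceil_le_ceil (mul_le_mul_of_nonneg_left hab (by exact_mod_cast hk))).trans
      (Int.ceil_le_floor_add_one _)
  have hcount : (intervalCount a b k : ℤ) = ⌊(k : ℚ) * b⌋ - ⌈(k : ℚ) * a⌉ + 1 := by
    rw [intervalCount, hset, Set.ncard_coe_finset, Int.card_Icc]
    omega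
  rw [← Int.cast_natCast, hcount, intervalDefect, Int.fract, Int.fract, Int.floor_neg]
  push_cast
  ring

end intervalDefect

section IsQuasiPeriod

variable {a b : ℚ} {N : ℕ}

theorem isQuasiPeriod_of_intervalDefect_eq_zero (hab : a ≤ b) (hN : intervalDefect a b N = 0) :
    IsQuasiPeriod a b N :=
  ⟨fun k => 1 - intervalDefect a b k, fun _ => b - a,
    fun k => by dsimp only; rw [add_comm, intervalDefect_add_of_eq_zero hN], fun _ => rfl,
    fun k hk => by rw [intervalCount_eq hab hk.le]; ring⟩

theorem IsQuasiPeriod.intervalDefect_add (hab : a ≤ b) (h : IsQuasiPeriod a b N) {k : ℤ}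
    (hk : 0 < k) : intervalDefect a b (k + N) = intervalDefect a b k := by
  obtain ⟨c₀, c₁, h₀, h₁, hrep⟩ := h
  have hstep : ∀ t : ℕ, intervalDefect a b (k + t * N) - intervalDefect a b k =
      t * (N * (b - a - c₁ k)) := by
    intro t
    have hkt : 0 < k + t * N := by positivity
    have e₁ := intervalCount_eq hab hkt.le
    have e₂ := hrep _ hkt
    rw [Function.Periodic.nat_mul h₀ t k, Function.Periodic.nat_mul h₁ t k] at e₂
    have e₃ := intervalCount_eq hab hk.le
    have e₄ := hrep k hk
    push_cast at e₁ e₂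
    linear_combination e₄ - e₃ + e₁ - e₂
  have hB : (N : ℚ) * (b - a - c₁ k) = 0 := by
    refine eq_zero_of_forall_abs_nat_mul_le (C := 2) fun t => abs_le.2 ⟨?_, ?_⟩ <;>
    · rw [← hstep t]
      linarith [@intervalDefect_nonneg a b k, @intervalDefect_lt_two a b k,
        @intervalDefect_nonneg a b (k + t * N), @intervalDefect_lt_two a b (k + t * N)]
  simpa [hB, sub_eq_zero] using hstep 1

theorem IsQuasiPeriod.intervalDefect_eq_zero (hab : a ≤ b) (hN : 0 < N)
    (h : IsQuasiPeriod a b N) : intervalDefect a b N = 0 := by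
  have hk₀ : 0 < (a.den * b.den * N : ℤ) := by positivity
  calc intervalDefect a b N
      = intervalDefect a b (a.den * b.den * N + N) :=
        (intervalDefect_add_of_eq_zero (intervalDefect_den_mul_den_mul _) _).symm
    _ = intervalDefect a b (a.den * b.den * N) := h.intervalDefect_add hab hk₀
    _ = 0 := intervalDefect_den_mul_den_mul _

end IsQuasiPeriod

/-- In dimension 1, the minimum quasi-period equals the denominator:
no quasi-period collapse occurs. -/
theorem stmt17 (a b : ℚ) (hab : a ≤ b) (d : ℕ)
    (hd : IsLeast {m : ℕ | 0 < m ∧ ((m : ℚ) * a).den = 1 ∧ ((m : ℚ) * b).den = 1} d) :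
    IsLeast {N : ℕ | 0 < N ∧ IsQuasiPeriod a b N} d := by
  obtain ⟨⟨hd₀, hd⟩, hmin⟩ := hd
  refine ⟨⟨hd₀, isQuasiPeriod_of_intervalDefect_eq_zero hab ?_⟩,
    fun N ⟨hN, hq⟩ => hmin ⟨hN, ?_⟩⟩
  · exact_mod_cast intervalDefect_eq_zero_iff_den.2 hd
  · exact_mod_cast intervalDefect_eq_zero_iff_den.1 (hq.intervalDefect_eq_zero hab hN)
end
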